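/- arXiv:2006.13705 — 8 statements merged into one kernel-verified Lean document; each statement's English description precedes it below -/
import Mathlib

section
/- An abelian group A is almost divisible if and only if for every sequence (q_n)_{n∈ℕ} of integers there exists m ∈ ℕ such that for every n > m one has (∏_{l<n} q_l)A = (∏_{l<m} q_l)A (where the empty product is 1). -/
/-- For `k : ℤ` and a subgroup `S` of an abelian group `A`, `zmul k S` is the subgroup
`kS = {k • a : a ∈ S}`.  In particular `zmul k ⊤` is the subgroup `kA` of `A`. -/
def zmul {A : Type*} [AddCommGroup A] (k : ℤ) (S : AddSubgroup A) : AddSubgroup A :=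
  S.map (zsmulAddGroupHom k)

/-- `A` is almost divisible: `pA = A` for all but finitely many primes `p`, and for
every prime `p` there exists `n : ℕ` with `p^(n+1)A = p^n A` (i.e. the `p`-length
`l_p(A)` is finite for every prime `p` and zero for almost every prime `p`). -/
def AlmostDivisible (A : Type*) [AddCommGroup A] : Prop :=
  {p : ℕ | p.Prime ∧ zmul (p : ℤ) (⊤ : AddSubgroup A) ≠ ⊤}.Finite ∧
    ∀ p : ℕ, p.Prime →
      ∃ n : ℕ, zmul ((p : ℤ) ^ (n + 1)) (⊤ : AddSubgroup A) = zmul ((p : ℤ) ^ n) ⊤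

/-! If `N = ∏ p ^ n_p` over the finitely many primes with `pA ≠ A`, where `p^(n_p+1)A = p^n_p A`,
then `(N p)A = NA` for every prime `p`, hence `(N m)A = NA` for all `m ≠ 0`; as `NA ⊆ kA`, Bezout
gives `kA = gcd(k, N)A` for `k ≠ 0`. So `A` has only finitely many subgroups `kA`, and every
descending chain `(q_0 ⋯ q_(n-1))A` stabilises. Conversely, constant sequences bound the
`p`-lengths, and if infinitely many primes `p` had `pA ≠ A`, the products of the first `n` of them
would give a chain that never stabilises, since each is coprime to the product of the earlier ones.
-/

section ZMul

variable {A : Type*} [AddCommGroup A]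

lemma mem_zmul_top {k : ℤ} {x : A} : x ∈ zmul k (⊤ : AddSubgroup A) ↔ ∃ a : A, k • a = x := by
  simp [zmul]

lemma zmul_mul (a b : ℤ) (S : AddSubgroup A) : zmul (a * b) S = zmul a (zmul b S) := by
  rw [zmul, zmul, zmul, AddSubgroup.map_map]
  congr 1
  ext x
  exact mul_smul a b x

lemma zmul_top_le_of_dvd {a b : ℤ} (h : a ∣ b) : zmul b (⊤ : AddSubgroup A) ≤ zmul a ⊤ := by
  obtain ⟨c, rfl⟩ := h
  rw [zmul_mul]
  exact AddSubgroup.map_mono le_top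

lemma zmul_top_eq_top_of_isCoprime {a b : ℤ} (hab : IsCoprime a b)
    (h : zmul (a * b) (⊤ : AddSubgroup A) = zmul a ⊤) : zmul b (⊤ : AddSubgroup A) = ⊤ := by
  obtain ⟨r, s, hrs⟩ := hab
  refine eq_top_iff.mpr fun x _ => mem_zmul_top.mpr ?_
  obtain ⟨y, hy⟩ := mem_zmul_top.mp (h ▸ mem_zmul_top.mpr ⟨x, rfl⟩ : a • x ∈ zmul (a * b) ⊤)
  refine ⟨(r * a) • y + s • x, ?_⟩
  calc b • ((r * a) • y + s • x) = r • (a * b) • y + (s * b) • x := by module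
    _ = (r * a + s * b) • x := by rw [hy, smul_smul, add_smul]
    _ = x := by rw [hrs, one_smul]

lemma zmul_gcd_top_eq_of_le {k N : ℤ} (h : zmul N (⊤ : AddSubgroup A) ≤ zmul k ⊤) :
    zmul (k.gcd N : ℤ) (⊤ : AddSubgroup A) = zmul k ⊤ := by
  refine le_antisymm (fun x hx => ?_) (zmul_top_le_of_dvd (Int.gcd_dvd_left k N))
  obtain ⟨a, rfl⟩ := mem_zmul_top.mp hx
  rw [Int.gcd_eq_gcd_ab, add_smul, mul_comm k, mul_comm N, mul_smul, mul_smul]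
  exact add_mem (mem_zmul_top.mpr ⟨_, smul_comm _ _ _⟩)
    (AddSubgroup.zsmul_mem _ (h (mem_zmul_top.mpr ⟨a, rfl⟩)) _)

lemma zmul_mul_top_eq_of_forall_prime {N : ℤ}
    (h : ∀ p : ℕ, p.Prime → zmul (N * p) (⊤ : AddSubgroup A) = zmul N ⊤) {m : ℕ} (hm : m ≠ 0) :
    zmul (N * m) (⊤ : AddSubgroup A) = zmul N ⊤ := by
  induction m using Nat.recOnMul with
  | zero => exact absurd rfl hm
  | one => simp
  | prime p hp => exact h p hp
  | mul a b ha hb =>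
    rw [Nat.cast_mul, ← mul_assoc, mul_comm, zmul_mul,
      ha (left_ne_zero_of_mul hm), ← zmul_mul, mul_comm, hb (right_ne_zero_of_mul hm)]

lemma finite_range_zmul_top_of_forall_prime {N : ℤ} (hN : N ≠ 0)
    (h : ∀ p : ℕ, p.Prime → zmul (N * p) (⊤ : AddSubgroup A) = zmul N ⊤) :
    (Set.range fun k : ℤ => zmul k (⊤ : AddSubgroup A)).Finite := by
  refine ((insert 0 N.natAbs.divisors).finite_toSet.image
    fun d : ℕ => zmul (d : ℤ) (⊤ : AddSubgroup A)).subset ?_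
  rintro _ ⟨k, rfl⟩
  rcases eq_or_ne k 0 with rfl | hk
  · exact ⟨0, by simp⟩
  have hNk : zmul N (⊤ : AddSubgroup A) ≤ zmul k ⊤ := by
    rw [← zmul_mul_top_eq_of_forall_prime h (Int.natAbs_ne_zero.mpr hk)]
    exact zmul_top_le_of_dvd (Dvd.dvd.mul_left Int.dvd_natAbs_self N)
  refine ⟨k.gcd N, ?_, zmul_gcd_top_eq_of_le hNk⟩
  simp [Int.gcd_dvd_natAbs_right, hN]

lemma zmul_prod_pow_mul_top_eq {s : Finset ℕ} {e : ℕ → ℕ}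
    (hs : ∀ p : ℕ, p.Prime → p ∉ s → zmul (p : ℤ) (⊤ : AddSubgroup A) = ⊤)
    (he : ∀ p ∈ s, zmul ((p : ℤ) ^ (e p + 1)) (⊤ : AddSubgroup A) = zmul ((p : ℤ) ^ e p) ⊤)
    (p : ℕ) (hp : p.Prime) :
    zmul ((∏ q ∈ s, (q : ℤ) ^ e q) * p) (⊤ : AddSubgroup A) = zmul (∏ q ∈ s, (q : ℤ) ^ e q) ⊤ := by
  by_cases hps : p ∈ s
  · rw [← Finset.mul_prod_erase s _ hps, mul_right_comm, ← pow_succ, mul_comm, zmul_mul, he p hps,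
      ← zmul_mul, mul_comm]
  · rw [zmul_mul, hs p hp hps]

end ZMul

lemma exists_forall_lt_eq_of_antitone {α : Type*} [PartialOrder α] {f : ℕ → α}
    (hf : Antitone f) (hfin : (Set.range f).Finite) : ∃ m, ∀ n, m < n → f n = f m := by
  obtain ⟨m, -, hm⟩ :=
    Set.Finite.exists_minimalFor' f Set.univ (by rwa [Set.image_univ]) Set.univ_nonempty
  exact ⟨m, fun n hmn => (hf hmn.le).antisymm (hm trivial (hf hmn.le))⟩

namespace AlmostDivisible

variable {A : Type*} [AddCommGroup A]

lemma finite_range_zmul_top (hA : AlmostDivisible A) :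
    (Set.range fun k : ℤ => zmul k (⊤ : AddSubgroup A)).Finite := by
  classical
  obtain ⟨hfin, hlen⟩ := hA
  choose! e he using hlen
  refine finite_range_zmul_top_of_forall_prime (N := ∏ p ∈ hfin.toFinset, (p : ℤ) ^ e p) ?_
    (zmul_prod_pow_mul_top_eq (fun p hp hps => ?_) fun p hps => he p ?_)
  · exact Finset.prod_ne_zero_iff.mpr fun p hps =>
      pow_ne_zero _ (Nat.cast_ne_zero.mpr ((hfin.mem_toFinset.mp hps).1.ne_zero))
  · by_contra hne
    exact hps (hfin.mem_toFinset.mpr ⟨hp, hne⟩)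
  · exact (hfin.mem_toFinset.mp hps).1

lemma exists_forall_lt_zmul_prod_eq (hA : AlmostDivisible A) (q : ℕ → ℤ) :
    ∃ m : ℕ, ∀ n : ℕ, m < n →
      zmul (∏ l ∈ Finset.range n, q l) (⊤ : AddSubgroup A)
        = zmul (∏ l ∈ Finset.range m, q l) ⊤ := by
  refine exists_forall_lt_eq_of_antitone (antitone_nat_of_succ_le fun n => ?_) ?_
  · rw [Finset.prod_range_succ]
    exact zmul_top_le_of_dvd (dvd_mul_right _ _)
  · exact hA.finite_range_zmul_top.subset (by rintro _ ⟨n, rfl⟩; exact ⟨_, rfl⟩)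

end AlmostDivisible

lemma finite_setOf_prime_zmul_ne_top {A : Type*} [AddCommGroup A]
    (H : ∀ q : ℕ → ℤ, ∃ m : ℕ, ∀ n : ℕ, m < n →
      zmul (∏ l ∈ Finset.range n, q l) (⊤ : AddSubgroup A)
        = zmul (∏ l ∈ Finset.range m, q l) ⊤) :
    {p : ℕ | p.Prime ∧ zmul (p : ℤ) (⊤ : AddSubgroup A) ≠ ⊤}.Finite := by
  by_contra hinf
  let e := Set.Infinite.natEmbedding _ hinf
  obtain ⟨m, hm⟩ := H fun i => ((e i : ℕ) : ℤ)
  have hcop : IsCoprime (∏ l ∈ Finset.range m, ((e l : ℕ) : ℤ)) ((e m : ℕ) : ℤ) := by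
    refine IsCoprime.prod_left fun l hl => Nat.isCoprime_iff_coprime.mpr <|
      (Nat.coprime_primes (e l).2.1 (e m).2.1).mpr fun hlm => ?_
    exact (Finset.mem_range.mp hl).ne (e.injective (Subtype.ext hlm))
  refine (e m).2.2 (zmul_top_eq_top_of_isCoprime hcop ?_)
  rw [← Finset.prod_range_succ]
  exact hm (m + 1) m.lt_succ_self

/-- An abelian group `A` is almost divisible iff for every sequence `(q_n)` of
integers there exists `m : ℕ` such that for every `n > m` one has
`(∏_{l<n} q_l)A = (∏_{l<m} q_l)A`. -/
theorem stmt1 {A : Type*} [AddCommGroup A] :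
    AlmostDivisible A ↔
      ∀ q : ℕ → ℤ, ∃ m : ℕ, ∀ n : ℕ, m < n →
        zmul (∏ l ∈ Finset.range n, q l) (⊤ : AddSubgroup A)
          = zmul (∏ l ∈ Finset.range m, q l) ⊤ := by
  refine ⟨fun hA => hA.exists_forall_lt_zmul_prod_eq, fun H => ⟨finite_setOf_prime_zmul_ne_top H,
    fun p _ => ?_⟩⟩
  obtain ⟨m, hm⟩ := H fun _ => (p : ℤ)
  exact ⟨m, by simpa using hm (m + 1) m.lt_succ_self⟩
end

section
/- An abelian group A is almost divisible and reduced if and only if A is bounded. -/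
/-- A subgroup `S` of `A` is divisible if `nS = S` for every `n ≥ 1`. -/
def DivisibleSubgroup {A : Type*} [AddCommGroup A] (S : AddSubgroup A) : Prop :=
  ∀ n : ℤ, 1 ≤ n → zmul n S = S

/-- `A` is reduced: its only divisible subgroup is the trivial subgroup. -/
def Reduced (A : Type*) [AddCommGroup A] : Prop :=
  ∀ S : AddSubgroup A, DivisibleSubgroup S → S = ⊥

/-- `A` is bounded: `mA = 0` for some `m ≥ 1`. -/
def BoundedGroup (A : Type*) [AddCommGroup A] : Prop :=
  ∃ m : ℤ, 1 ≤ m ∧ zmul m (⊤ : AddSubgroup A) = ⊥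

section

variable {A : Type*} [AddCommGroup A]

lemma mem_zmul {k : ℤ} {S : AddSubgroup A} {x : A} :
    x ∈ zmul k S ↔ ∃ y ∈ S, k • y = x := by
  simp [zmul, AddSubgroup.mem_map, zsmulAddGroupHom]

lemma zmul_zmul (a b : ℤ) (S : AddSubgroup A) : zmul a (zmul b S) = zmul (a * b) S := by
  simp only [zmul, AddSubgroup.map_map]
  congr 1
  ext x
  exact (mul_smul a b x).symm

lemma zmul_one (S : AddSubgroup A) : zmul 1 S = S := by
  ext x
  simp [mem_zmul]

lemma zmul_le (k : ℤ) (S : AddSubgroup A) : zmul k S ≤ S := by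
  rintro _ hx
  obtain ⟨y, hy, rfl⟩ := mem_zmul.1 hx
  exact S.zsmul_mem hy k

lemma zmul_mono (k : ℤ) {S T : AddSubgroup A} (h : S ≤ T) : zmul k S ≤ zmul k T :=
  AddSubgroup.map_mono h

lemma smul_eq_zero_of_zmul_top_eq_bot {m : ℤ} (h : zmul m (⊤ : AddSubgroup A) = ⊥) (a : A) :
    m • a = 0 := by
  have : m • a ∈ zmul m (⊤ : AddSubgroup A) := mem_zmul.2 ⟨a, trivial, rfl⟩
  rwa [h, AddSubgroup.mem_bot] at this

lemma zmul_eq_self_of_isCoprime {S : AddSubgroup A} {q m : ℤ}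
    (h : IsCoprime q m) (hm : ∀ x ∈ S, m • x = 0) : zmul q S = S := by
  refine le_antisymm (zmul_le q S) fun x hx => ?_
  obtain ⟨u, v, huv⟩ := h
  refine mem_zmul.2 ⟨u • x, S.zsmul_mem hx u, ?_⟩
  calc q • u • x = (u * q) • x + v • (m • x) := by
        rw [hm x hx, smul_zero, add_zero, ← mul_smul, mul_comm]
    _ = x := by rw [← mul_smul, ← add_smul, huv, one_smul]

lemma zmul_zmul_eq_of_dvd {S : AddSubgroup A} {k a m : ℤ}
    (h : zmul (k * a) S = zmul a S) (ha : a ∣ m) : zmul k (zmul m S) = zmul m S := by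
  obtain ⟨c, rfl⟩ := ha
  rw [zmul_zmul, show k * (a * c) = c * (k * a) by ring, ← zmul_zmul, h, zmul_zmul, mul_comm]

lemma divisibleSubgroup_of_forall_prime {S : AddSubgroup A}
    (h : ∀ p : ℕ, p.Prime → zmul (p : ℤ) S = S) : DivisibleSubgroup S := by
  intro n hn
  lift n to ℕ using by omega
  have key : ∀ n : ℕ, 0 < n → zmul (n : ℤ) S = S := by
    refine induction_on_primes (by simp) (fun _ => by simpa using zmul_one S) ?_
    intro p a hp ih hpa
    rw [Nat.cast_mul, ← zmul_zmul, ih (Nat.pos_of_mul_pos_left hpa), h p hp]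
  exact key n (by omega)

lemma AlmostDivisible.exists_divisibleSubgroup_zmul (hA : AlmostDivisible A) :
    ∃ m : ℕ, 0 < m ∧ DivisibleSubgroup (zmul (m : ℤ) (⊤ : AddSubgroup A)) := by
  classical
  obtain ⟨hfin, hstab⟩ := hA
  choose! n hn using hstab
  let F := hfin.toFinset
  refine ⟨∏ p ∈ F, p ^ n p,
    Finset.prod_pos fun p hp => pow_pos (hfin.mem_toFinset.1 hp).1.pos _, ?_⟩
  refine divisibleSubgroup_of_forall_prime fun q hq => ?_
  by_cases hqF : q ∈ F
  · refine zmul_zmul_eq_of_dvd (a := (q : ℤ) ^ n q) ?_ ?_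
    · rw [← pow_succ', hn q hq]
    · exact_mod_cast Finset.dvd_prod_of_mem (fun p => p ^ n p) hqF
  · have hqA : zmul (q : ℤ) (⊤ : AddSubgroup A) = ⊤ := by
      by_contra hne
      exact hqF (hfin.mem_toFinset.2 ⟨hq, hne⟩)
    exact zmul_zmul_eq_of_dvd (by rwa [mul_one, zmul_one]) (one_dvd _)

lemma almostDivisible_of_smul_eq_zero {M : ℕ} (hM : M ≠ 0)
    (h : ∀ a : A, (M : ℤ) • a = 0) : AlmostDivisible A := by
  have top_of_coprime : ∀ p : ℕ, p.Coprime M → zmul (p : ℤ) (⊤ : AddSubgroup A) = ⊤ :=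
    fun p hp => zmul_eq_self_of_isCoprime (Nat.isCoprime_iff_coprime.2 hp) fun x _ => h x
  refine ⟨(Set.finite_Iic M).subset fun p ⟨hp, hne⟩ => ?_, fun p hp => ?_⟩
  · by_contra hle
    refine hne (top_of_coprime p (hp.coprime_iff_not_dvd.2 fun hdvd => hle ?_))
    exact Nat.le_of_dvd (Nat.pos_of_ne_zero hM) hdvd
  · obtain ⟨e, c, hpc, hMc⟩ := Nat.exists_eq_pow_mul_and_not_dvd hM p hp.ne_one
    refine ⟨e, ?_⟩
    rw [pow_succ', ← zmul_zmul]
    refine zmul_eq_self_of_isCoprime (m := c)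
      (Nat.isCoprime_iff_coprime.2 (hp.coprime_iff_not_dvd.2 hpc)) fun x hx => ?_
    obtain ⟨y, -, rfl⟩ := mem_zmul.1 hx
    rw [← mul_smul, mul_comm]
    simpa [hMc] using h y

lemma reduced_of_zmul_top_eq_bot {m : ℤ} (hm : 1 ≤ m)
    (h : zmul m (⊤ : AddSubgroup A) = ⊥) : Reduced A := fun S hS =>
  le_bot_iff.1 <| calc
    S = zmul m S := (hS m hm).symm
    _ ≤ zmul m ⊤ := zmul_mono m le_top
    _ = ⊥ := h

end

/-- An abelian group `A` is almost divisible and reduced iff `A` is bounded. -/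
theorem stmt2 {A : Type*} [AddCommGroup A] :
    (AlmostDivisible A ∧ Reduced A) ↔ BoundedGroup A := by
  constructor
  · rintro ⟨hA, hred⟩
    obtain ⟨m, hm, hdiv⟩ := hA.exists_divisibleSubgroup_zmul
    exact ⟨m, by exact_mod_cast hm, hred _ hdiv⟩
  · rintro ⟨m, hm, hbot⟩
    refine ⟨?_, reduced_of_zmul_top_eq_bot hm hbot⟩
    lift m to ℕ using by omega
    exact almostDivisible_of_smul_eq_zero (by omega) (smul_eq_zero_of_zmul_top_eq_bot hbot)
end

section
/- Let A be an abelian group, 𝒟 a small category and X : 𝒟 → Set_* a diagram of pointed sets. If A is uniquely divisible (for every a ∈ A and n ≥ 1 there is a unique b ∈ A with nb = a), then the kernel and cokernel of the natural map ρ : (lim_𝒟 X)∧A → lim_𝒟(X∧A) are uniquely divisible. -/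
/-!
Unique divisibility says that `n • ·` is bijective for every `n ≥ 1`. It passes to products,
to finitely supported functions, and to subgroups closed under division; hence both
`(lim X) ∧ A` and `lim (X ∧ A)` are uniquely divisible. For a homomorphism between uniquely
divisible groups, the kernel and the image are closed under division, and the quotient of a
uniquely divisible group by a uniquely divisible subgroup is again uniquely divisible.
-/

open CategoryTheory Finsupp

universe u v w

/-- The smash product `Y ∧ A` of a pointed set `(Y, y0)` with an abelian group `A`:
the group of finitely supported functions `Y →₀ A` vanishing at the basepoint,
i.e. `⊕_{y ∈ Y∖{y0}} A`. -/
def Smash (Y : Type u) (y0 : Y) (A : Type v) [AddCommGroup A] :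
    AddSubgroup (Y →₀ A) where
  carrier := {f | f y0 = 0}
  add_mem' := by
    intro a b ha hb
    simp only [Set.mem_setOf_eq, Finsupp.add_apply] at *
    rw [ha, hb, add_zero]
  zero_mem' := by simp
  neg_mem' := by
    intro a ha
    simp only [Set.mem_setOf_eq, Finsupp.neg_apply] at *
    rw [ha, neg_zero]

theorem mem_smash {Y : Type u} {y0 : Y} {A : Type v} [AddCommGroup A] {f : Y →₀ A} :
    f ∈ Smash Y y0 A ↔ f y0 = 0 := Iff.rfl

/-- The pushforward homomorphism `g_* : Y∧A → Z∧A` induced by a (pointed) map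
`g : Y → Z`: `(g_* f)(z) = ∑_{y : g y = z} f y` for `z ≠ z0`, and `(g_* f)(z0) = 0`. -/
noncomputable def smashMap {Y : Type u} {Z : Type v} (y0 : Y) (z0 : Z) (g : Y → Z)
    (A : Type w) [AddCommGroup A] :
    Smash Y y0 A →+ Smash Z z0 A where
  toFun f := ⟨(Finsupp.mapDomain g f.1).erase z0, Finsupp.erase_same⟩
  map_zero' := by
    apply Subtype.ext
    simp
  map_add' f₁ f₂ := by
    apply Subtype.ext
    show (Finsupp.mapDomain g ((f₁ : Y →₀ A) + (f₂ : Y →₀ A))).erase z0 = _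
    rw [Finsupp.mapDomain_add, Finsupp.erase_add]
    rfl

theorem smashMap_comp {Y : Type u} {Z : Type v} {W : Type w} (y0 : Y) (z0 : Z) (w0 : W)
    (g : Y → Z) (g' : Z → W) (hg' : g' z0 = w0)
    (A : Type*) [AddCommGroup A] (f : Smash Y y0 A) :
    smashMap z0 w0 g' A (smashMap y0 z0 g A f) = smashMap y0 w0 (g' ∘ g) A f := by
  classical
  apply Subtype.ext
  show (Finsupp.mapDomain g' ((Finsupp.mapDomain g f.1).erase z0)).erase w0
      = (Finsupp.mapDomain (g' ∘ g) f.1).erase w0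
  rw [Finsupp.mapDomain_comp]
  set h := Finsupp.mapDomain g f.1 with hh
  have key : Finsupp.mapDomain g' (h.erase z0)
      = Finsupp.mapDomain g' h - Finsupp.single w0 (h z0) := by
    have h1 : h.erase z0 = h - Finsupp.single z0 (h z0) := by
      ext a
      by_cases ha : a = z0
      · subst ha; simp
      · simp [Finsupp.erase_ne ha, Finsupp.single_apply, Ne.symm ha, ha]
    rw [h1]
    have h2 := map_sub (Finsupp.mapDomain.addMonoidHom g') h (Finsupp.single z0 (h z0))
    simp only [Finsupp.mapDomain.addMonoidHom_apply] at h2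
    rw [h2, Finsupp.mapDomain_single, hg']
  rw [key]
  ext a
  by_cases ha : a = w0
  · subst ha; simp
  · simp [Finsupp.erase_ne ha, Finsupp.single_apply, Ne.symm ha, ha]
/-- The inverse limit of a diagram of pointed sets, as a subset of the product. -/
def plim {D : Type u} [Category.{v} D] (F : D ⥤ Pointed.{w}) :
    Set (∀ d : D, (F.obj d).X) :=
  {x | ∀ ⦃d d' : D⦄ (u : d ⟶ d'), (F.map u).toFun (x d) = x d'}

/-- The basepoint of the inverse limit of a diagram of pointed sets. -/
def plimPt {D : Type u} [Category.{v} D] (F : D ⥤ Pointed.{w}) : plim F :=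
  ⟨fun d => (F.obj d).point, fun _ _ u => (F.map u).map_point⟩

/-- The inverse limit `lim_D (X ∧ A)` of the diagram of abelian groups obtained by
smashing a diagram of pointed sets with an abelian group `A`. -/
noncomputable def glim {D : Type u} [Category.{v} D] (F : D ⥤ Pointed.{w})
    (A : Type*) [AddCommGroup A] :
    AddSubgroup (∀ d : D, Smash (F.obj d).X (F.obj d).point A) where
  carrier := {h | ∀ ⦃d d' : D⦄ (u : d ⟶ d'),
      smashMap (F.obj d).point (F.obj d').point (F.map u).toFun A (h d) = h d'}
  add_mem' := by
    intro a b ha hb d d' u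
    rw [Pi.add_apply, map_add, ha u, hb u]
    rfl
  zero_mem' := by
    intro d d' u
    rw [Pi.zero_apply, map_zero]
    rfl
  neg_mem' := by
    intro a ha d d' u
    rw [Pi.neg_apply, map_neg, ha u]
    rfl

/-- The natural map `ρ : (lim_D X) ∧ A → lim_D (X ∧ A)`, whose component at `d`
is induced by the projection `lim_D X → X d`. -/
noncomputable def rho {D : Type u} [Category.{v} D] (F : D ⥤ Pointed.{w})
    (A : Type*) [AddCommGroup A] :
    Smash (plim F) (plimPt F) A →+ glim F A where
  toFun f := ⟨fun d => smashMap (plimPt F) (F.obj d).point (fun x => x.1 d) A f, by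
    intro d d' u
    rw [smashMap_comp (plimPt F) (F.obj d).point (F.obj d').point _ _ (F.map u).map_point A f]
    have : ((F.map u).toFun ∘ fun x : plim F => x.1 d) = fun x : plim F => x.1 d' := by
      funext x
      exact x.2 u
    rw [this]⟩
  map_zero' := by
    apply Subtype.ext
    funext d
    show smashMap (plimPt F) (F.obj d).point (fun x => x.1 d) A 0 = (0 : Smash _ _ A)
    exact map_zero _
  map_add' f₁ f₂ := by
    apply Subtype.ext
    funext d
    show smashMap (plimPt F) (F.obj d).point (fun x => x.1 d) A (f₁ + f₂)
        = smashMap (plimPt F) (F.obj d).point (fun x => x.1 d) A f₁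
          + smashMap (plimPt F) (F.obj d).point (fun x => x.1 d) A f₂
    exact map_add _ f₁ f₂
/-- A group `G` is uniquely divisible if for every `a : G` and `n ≥ 1` there is a
unique `b : G` with `n • b = a`. -/
def UniquelyDivisible (G : Type*) [AddCommGroup G] : Prop :=
  ∀ (a : G) (n : ℕ), 1 ≤ n → ∃! b : G, n • b = a

namespace UniquelyDivisible

variable {G H : Type*} [AddCommGroup G] [AddCommGroup H]

theorem iff_bijective :
    UniquelyDivisible G ↔ ∀ n : ℕ, 1 ≤ n → Function.Bijective (fun x : G => n • x) := by
  simp only [Function.bijective_iff_existsUnique, UniquelyDivisible]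
  exact ⟨fun h n hn a => h a n hn, fun h a n hn => h n hn a⟩

theorem nsmul_injective (hG : UniquelyDivisible G) {n : ℕ} (hn : 1 ≤ n) :
    Function.Injective (fun x : G => n • x) :=
  (iff_bijective.mp hG n hn).injective

theorem exists_nsmul_eq (hG : UniquelyDivisible G) {n : ℕ} (hn : 1 ≤ n) (a : G) :
    ∃ x, n • x = a :=
  (hG a n hn).exists

theorem of_nsmul_injective_of_exists_nsmul_eq
    (inj : ∀ n : ℕ, 1 ≤ n → ∀ x y : G, n • x = n • y → x = y)
    (surj : ∀ n : ℕ, 1 ≤ n → ∀ a : G, ∃ x, n • x = a) : UniquelyDivisible G :=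
  iff_bijective.mpr fun n hn => ⟨inj n hn, surj n hn⟩

theorem addSubgroup (hG : UniquelyDivisible G) (S : AddSubgroup G)
    (hS : ∀ n : ℕ, 1 ≤ n → ∀ x : G, n • x ∈ S → x ∈ S) : UniquelyDivisible S := by
  refine of_nsmul_injective_of_exists_nsmul_eq (fun n hn x y hxy => ?_) (fun n hn a => ?_)
  · exact Subtype.ext (hG.nsmul_injective hn (congrArg Subtype.val hxy))
  · obtain ⟨x, hx⟩ := hG.exists_nsmul_eq hn (a : G)
    exact ⟨⟨x, hS n hn x (hx ▸ a.2)⟩, Subtype.ext hx⟩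

theorem ker (hG : UniquelyDivisible G) (hH : UniquelyDivisible H) (f : G →+ H) :
    UniquelyDivisible f.ker :=
  hG.addSubgroup f.ker fun n hn x hx =>
    hH.nsmul_injective hn (by simpa only [AddMonoidHom.mem_ker, map_nsmul, smul_zero] using hx)

theorem range (hG : UniquelyDivisible G) (hH : UniquelyDivisible H) (f : G →+ H) :
    UniquelyDivisible f.range := by
  refine hH.addSubgroup f.range fun n hn y ⟨x, hx⟩ => ?_
  obtain ⟨x', rfl⟩ := hG.exists_nsmul_eq hn x
  exact ⟨x', hH.nsmul_injective hn (by simpa only [map_nsmul] using hx)⟩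

theorem mem_of_nsmul_mem (hG : UniquelyDivisible G) (S : AddSubgroup G)
    (hS : UniquelyDivisible S) {n : ℕ} (hn : 1 ≤ n) {x : G} (hx : n • x ∈ S) : x ∈ S := by
  obtain ⟨s, hs⟩ := hS.exists_nsmul_eq hn ⟨n • x, hx⟩
  exact hG.nsmul_injective hn (congrArg Subtype.val hs) ▸ s.2

theorem quotient (hG : UniquelyDivisible G) (S : AddSubgroup G) (hS : UniquelyDivisible S) :
    UniquelyDivisible (G ⧸ S) := by
  refine of_nsmul_injective_of_exists_nsmul_eq (fun n hn x y hxy => ?_) (fun n hn a => ?_)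
  · induction x using QuotientAddGroup.induction_on with | H x => ?_
    induction y using QuotientAddGroup.induction_on with | H y => ?_
    rw [← QuotientAddGroup.mk_nsmul, ← QuotientAddGroup.mk_nsmul,
      QuotientAddGroup.eq_iff_sub_mem, ← smul_sub] at hxy
    exact QuotientAddGroup.eq_iff_sub_mem.mpr (hG.mem_of_nsmul_mem S hS hn hxy)
  · induction a using QuotientAddGroup.induction_on with | H a => ?_
    obtain ⟨x, rfl⟩ := hG.exists_nsmul_eq hn a
    exact ⟨x, rfl⟩

theorem pi {ι : Type*} {M : ι → Type*} [∀ i, AddCommGroup (M i)]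
    (hM : ∀ i, UniquelyDivisible (M i)) : UniquelyDivisible (∀ i, M i) := by
  refine of_nsmul_injective_of_exists_nsmul_eq (fun n hn x y hxy => ?_) (fun n hn a => ?_)
  · exact funext fun i => (hM i).nsmul_injective hn (congrFun hxy i)
  · choose x hx using fun i => (hM i).exists_nsmul_eq hn (a i)
    exact ⟨x, funext hx⟩

theorem finsupp {Y : Type*} (hG : UniquelyDivisible G) : UniquelyDivisible (Y →₀ G) := by
  refine of_nsmul_injective_of_exists_nsmul_eq (fun n hn x y hxy => ?_) (fun n hn a => ?_)
  · exact Finsupp.ext fun i => hG.nsmul_injective hn (DFunLike.congr_fun hxy i)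
  · choose d hd using hG.exists_nsmul_eq hn
    have hd0 : d 0 = 0 := hG.nsmul_injective hn (by simp only [hd, smul_zero])
    exact ⟨Finsupp.mapRange d hd0 a, Finsupp.ext fun y => by simp [hd]⟩

theorem smash {A : Type*} [AddCommGroup A] (hA : UniquelyDivisible A) (Y : Type*) (y0 : Y) :
    UniquelyDivisible (Smash Y y0 A) :=
  hA.finsupp.addSubgroup _ fun n hn f hf =>
    hA.nsmul_injective hn (by simpa only [mem_smash, Finsupp.smul_apply, smul_zero] using hf)

theorem glim {D : Type*} [Category D] (F : D ⥤ Pointed) {A : Type*} [AddCommGroup A]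
    (hA : UniquelyDivisible A) : UniquelyDivisible (glim F A) :=
  (pi fun d => hA.smash _ _).addSubgroup _ fun n hn h hh d d' u =>
    (hA.smash _ _).nsmul_injective hn (by simpa only [← map_nsmul, Pi.smul_apply] using hh u)

end UniquelyDivisible

/-- Let `A` be an abelian group, `D` a small category and `F : D ⥤ Set_*` a diagram of
pointed sets.  If `A` is uniquely divisible, then the kernel and the cokernel of the
natural map `ρ : (lim_D F) ∧ A → lim_D (F ∧ A)` are uniquely divisible. -/
theorem stmt5 {D : Type u} [Category.{v} D] (F : D ⥤ Pointed.{w})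
    {A : Type*} [AddCommGroup A] (hA : UniquelyDivisible A) :
    UniquelyDivisible (rho F A).ker ∧
      UniquelyDivisible (↥(glim F A) ⧸ (rho F A).range) := by
  have hsource := hA.smash (plim F) (plimPt F)
  have htarget := hA.glim F
  exact ⟨hsource.ker htarget _, htarget.quotient _ (hsource.range htarget _)⟩
end

section
/- Let A be an abelian group, 𝒟 a small category and X : 𝒟 → Set_* a diagram of pointed sets. If A is almost uniquely divisible (A = Q ⊕ B for subgroups Q, B with Q uniquely divisible and B bounded), then the kernel and cokernel of the natural map ρ : (lim_𝒟 X)∧A → lim_𝒟(X∧A) are almost uniquely divisible. -/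
open CategoryTheory Finsupp

universe u v w

/-- A group `G` is almost uniquely divisible if it is the (internal) direct sum
`G = Q ⊕ B` of a uniquely divisible subgroup `Q` and a bounded subgroup `B`. -/
def AlmostUniquelyDivisible (G : Type*) [AddCommGroup G] : Prop :=
  ∃ Q B : AddSubgroup G, IsCompl Q B ∧ UniquelyDivisible Q ∧
    ∃ m : ℕ, 1 ≤ m ∧ ∀ b ∈ B, m • b = 0

/-
Write `A = Q ⊕ B` and let `e` be the projection onto `Q` along `B`. For each `n ≥ 1`, division
by `n` in `Q` is a homomorphism `d`, so `e` and `d` act pointwise on `(lim X)∧A` and on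
`lim (X∧A)`, compatibly with `ρ` and with the structure maps of the diagram. On both groups the
pointwise `e` is again a projection with uniquely divisible image and kernel killed by the bound
of `B`. Such a projection restricts to `ker ρ` and descends to `coker ρ`, and so do the division
maps, because an element of `im e` is determined by its `n`-fold multiple.
-/

section AUDProjection

variable {G : Type*} [AddCommGroup G]

def IsDivOnRange (e : G →+ G) (n : ℕ) (d : G →+ G) : Prop :=
  ∀ g, e (d g) = d g ∧ n • d g = e g

structure IsAUDProjection (e : G →+ G) (m : ℕ) : Prop where
  idem : ∀ g, e (e g) = e g
  exists_div : ∀ n : ℕ, 1 ≤ n → ∃ d, IsDivOnRange e n d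
  eq_zero_of_nsmul : ∀ n : ℕ, 1 ≤ n → ∀ g, e g = g → n • g = 0 → g = 0
  nsmul_sub : ∀ g, m • (g - e g) = 0

theorem UniquelyDivisible.nsmul_bijective (hG : UniquelyDivisible G) {n : ℕ} (hn : 1 ≤ n) :
    Function.Bijective (n • · : G → G) :=
  ⟨fun a _ h => (hG (n • a) n hn).unique rfl h.symm, fun a => (hG a n hn).exists⟩

theorem AlmostUniquelyDivisible.exists_isAUDProjection (hG : AlmostUniquelyDivisible G) :
    ∃ (e : G →+ G) (m : ℕ), 1 ≤ m ∧ IsAUDProjection e m := by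
  obtain ⟨Q, B, hQB, hQ, m, hm, hB⟩ := hG
  have hQB' := AddSubgroup.toIntSubmodule.isCompl hQB
  let e := ((AddSubgroup.toIntSubmodule Q).projection _ hQB').toAddMonoidHom
  have he_mem (g : G) : e g ∈ Q := Submodule.projection_apply_mem hQB' g
  have he_fix {g : G} (hg : g ∈ Q) : e g = g := Submodule.projection_apply_of_mem_left hQB' hg
  refine ⟨e, m, hm, fun g => he_fix (he_mem g), fun n hn => ?_, fun n hn g hg h => ?_,
    fun g => hB _ (Submodule.sub_projection_mem hQB' g)⟩
  · let nsmulQ := AddEquiv.ofBijective (nsmulAddMonoidHom n) (hQ.nsmul_bijective hn)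
    let d := Q.subtype.comp ((nsmulQ.symm : Q →+ Q).comp (e.codRestrict Q he_mem))
    exact ⟨d, fun g => ⟨he_fix (nsmulQ.symm _).2,
      congrArg Subtype.val (nsmulQ.apply_symm_apply (e.codRestrict Q he_mem g))⟩⟩
  · have hg' : g ∈ Q := hg ▸ he_mem g
    have : (⟨g, hg'⟩ : Q) = 0 :=
      (hQ.nsmul_bijective hn).1
        (Subtype.ext (by simpa using h) : n • (⟨g, hg'⟩ : Q) = n • 0)
    exact congrArg Subtype.val this

namespace IsAUDProjection

variable {e : G →+ G} {m : ℕ}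

theorem eq_of_nsmul_eq (he : IsAUDProjection e m) {n : ℕ} (hn : 1 ≤ n) {x y : G}
    (hx : e x = x) (hy : e y = y) (h : n • x = n • y) : x = y :=
  sub_eq_zero.mp <| he.eq_zero_of_nsmul n hn _ (by rw [map_sub, hx, hy])
    (by rw [smul_sub, h, sub_self])

theorem almostUniquelyDivisible (he : IsAUDProjection e m) (hm : 1 ≤ m) :
    AlmostUniquelyDivisible G := by
  have fixed_of_mem : ∀ x ∈ e.range, e x = x := by
    rintro _ ⟨y, rfl⟩
    exact he.idem y
  refine ⟨e.range, e.ker, ⟨?_, ?_⟩, ?_, m, hm, fun g hg => ?_⟩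
  · refine AddSubgroup.disjoint_def.mpr fun {x} hx hx' => ?_
    rw [← fixed_of_mem x hx]
    exact hx'
  · refine codisjoint_iff.mpr (eq_top_iff.mpr fun g _ => ?_)
    rw [← add_sub_cancel (e g) g]
    refine AddSubgroup.add_mem_sup ⟨g, rfl⟩ ?_
    rw [AddMonoidHom.mem_ker, map_sub, he.idem, sub_self]
  · rintro ⟨a, ha⟩ n hn
    obtain ⟨d, hd⟩ := he.exists_div n hn
    refine ⟨⟨d a, d a, (hd a).1⟩, Subtype.ext ?_, fun b hb => Subtype.ext ?_⟩
    · simp only [AddSubgroup.coe_nsmul, (hd a).2, fixed_of_mem a ha]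
    · refine he.eq_of_nsmul_eq hn (fixed_of_mem b b.2) (hd a).1 ?_
      rw [(hd a).2, fixed_of_mem a ha, ← AddSubgroup.coe_nsmul, hb]
  · simpa [AddMonoidHom.mem_ker.mp hg] using he.nsmul_sub g

theorem exists_restrict (he : IsAUDProjection e m) (H : AddSubgroup G) (heH : H ≤ H.comap e)
    (hdH : ∀ n d, 1 ≤ n → IsDivOnRange e n d → H ≤ H.comap d) :
    ∃ e' : H →+ H, IsAUDProjection e' m := by
  let restrict (φ : G →+ G) (hφ : H ≤ H.comap φ) : H →+ H :=
    (φ.comp H.subtype).codRestrict H fun x => hφ x.2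
  refine ⟨restrict e heH, ⟨fun g => Subtype.ext (he.idem g), fun n hn => ?_,
    fun n hn g hg h => Subtype.ext (he.eq_zero_of_nsmul n hn g (congrArg Subtype.val hg)
      (congrArg Subtype.val h)), fun g => Subtype.ext (he.nsmul_sub g)⟩⟩
  obtain ⟨d, hd⟩ := he.exists_div n hn
  exact ⟨restrict d (hdH n d hn hd), fun g => ⟨Subtype.ext (hd g).1, Subtype.ext (hd g).2⟩⟩

theorem exists_quotient (he : IsAUDProjection e m) (H : AddSubgroup G) (heH : H ≤ H.comap e)
    (hdH : ∀ n d, 1 ≤ n → IsDivOnRange e n d → H ≤ H.comap d) :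
    ∃ e' : G ⧸ H →+ G ⧸ H, IsAUDProjection e' m := by
  let descend (φ : G →+ G) (hφ : H ≤ H.comap φ) : G ⧸ H →+ G ⧸ H :=
    QuotientAddGroup.map H H φ hφ
  refine ⟨descend e heH, ⟨fun g => ?_, fun n hn => ?_, fun n hn g hg h => ?_, fun g => ?_⟩⟩
  · induction g using QuotientAddGroup.induction_on
    simp only [descend, QuotientAddGroup.map_mk, he.idem]
  · obtain ⟨d, hd⟩ := he.exists_div n hn
    refine ⟨descend d (hdH n d hn hd), fun g => ?_⟩
    induction g using QuotientAddGroup.induction_on with | H g => ?_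
    simp only [descend, QuotientAddGroup.map_mk, (hd g).1, ← QuotientAddGroup.mk_nsmul, (hd g).2,
      and_self]
  · induction g using QuotientAddGroup.induction_on with | H g => ?_
    obtain ⟨d, hd⟩ := he.exists_div n hn
    have hdg : d (n • g) = e g := he.eq_of_nsmul_eq hn (hd _).1 (he.idem g)
      (by rw [(hd _).2, map_nsmul])
    have hng : n • g ∈ H :=
      (QuotientAddGroup.eq_zero_iff _).mp (by rwa [QuotientAddGroup.mk_nsmul])
    rw [← hg]
    exact (QuotientAddGroup.eq_zero_iff _).mpr (hdg ▸ hdH n d hn hd hng)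
  · induction g using QuotientAddGroup.induction_on with | H g => ?_
    simp only [descend, QuotientAddGroup.map_mk, ← QuotientAddGroup.mk_sub,
      ← QuotientAddGroup.mk_nsmul, he.nsmul_sub g, QuotientAddGroup.mk_zero]

variable {M N : Type*} [AddCommGroup M] [AddCommGroup N] {eM : M →+ M} {eN : N →+ N}
  {f : M →+ N}

theorem exists_ker (hM : IsAUDProjection eM m) (hN : IsAUDProjection eN m)
    (hf : ∀ x, f (eM x) = eN (f x)) : ∃ e' : f.ker →+ f.ker, IsAUDProjection e' m := by
  refine hM.exists_restrict f.ker (fun x hx => ?_) fun n d hn hd x hx => ?_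
  · rw [AddSubgroup.mem_comap, AddMonoidHom.mem_ker, hf, AddMonoidHom.mem_ker.mp hx, map_zero]
  · refine hN.eq_of_nsmul_eq hn (by rw [← hf, (hd x).1]) (map_zero eN) ?_
    rw [← map_nsmul, (hd x).2, hf, AddMonoidHom.mem_ker.mp hx, map_zero, smul_zero]

theorem exists_coker (hM : IsAUDProjection eM m) (hN : IsAUDProjection eN m)
    (hf : ∀ x, f (eM x) = eN (f x)) :
    ∃ e' : N ⧸ f.range →+ N ⧸ f.range, IsAUDProjection e' m := by
  refine hN.exists_quotient f.range (fun _ ⟨x, hx⟩ => ⟨eM x, hx ▸ hf x⟩)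
    fun n d hn hd _ ⟨x, hx⟩ => ?_
  obtain ⟨dM, hdM⟩ := hM.exists_div n hn
  refine ⟨dM x, hN.eq_of_nsmul_eq hn (by rw [← hf, (hdM x).1]) (hx ▸ (hd _).1) ?_⟩
  rw [← map_nsmul, (hdM x).2, (hd _).2, hf, hx]

theorem of_pointwise {A ι : Type*} [AddCommGroup A] {e : A →+ A} (he : IsAUDProjection e m)
    (ev : ι → G →+ A) (hev : ∀ g, (∀ i, ev i g = 0) → g = 0)
    (T : (A →+ A) → G →+ G) (hT : ∀ φ g i, ev i (T φ g) = φ (ev i g)) :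
    IsAUDProjection (T e) m := by
  have ext (g g' : G) (h : ∀ i, ev i g = ev i g') : g = g' :=
    sub_eq_zero.mp <| hev _ fun i => by rw [map_sub, h, sub_self]
  refine ⟨fun g => ext _ _ fun i => by simp only [hT, he.idem], fun n hn => ?_,
    fun n hn g hg h => hev g fun i => ?_, fun g => hev _ fun i => ?_⟩
  · obtain ⟨d, hd⟩ := he.exists_div n hn
    exact ⟨T d, fun g => ⟨ext _ _ fun i => by rw [hT, hT, (hd _).1],
      ext _ _ fun i => by rw [map_nsmul, hT, hT, (hd _).2]⟩⟩
  · have hi : e (ev i g) = ev i g := by rw [← hT, hg]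
    exact he.eq_zero_of_nsmul n hn _ hi (by rw [← map_nsmul, h, map_zero])
  · rw [map_nsmul, map_sub, hT, he.nsmul_sub]

end IsAUDProjection

end AUDProjection

section Pointwise

variable {A B : Type*} [AddCommGroup A] [AddCommGroup B] {e : A →+ A} {m : ℕ}

noncomputable def smashMapRange {Y : Type*} (y0 : Y) (φ : A →+ B) :
    Smash Y y0 A →+ Smash Y y0 B :=
  ((Finsupp.mapRange.addMonoidHom φ).comp (Smash Y y0 A).subtype).codRestrict _ fun f => by
    simp [mem_smash, mem_smash.mp f.2]

theorem smashMap_smashMapRange {Y Z : Type*} (y0 : Y) (z0 : Z) (g : Y → Z) (φ : A →+ B)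
    (f : Smash Y y0 A) :
    smashMap y0 z0 g B (smashMapRange y0 φ f) = smashMapRange z0 φ (smashMap y0 z0 g A f) := by
  apply Subtype.ext
  show (mapDomain g (mapRange φ φ.map_zero f.1)).erase z0
      = mapRange φ φ.map_zero ((mapDomain g f.1).erase z0)
  rw [mapDomain_mapRange _ _ _ _ φ.map_add]
  ext z
  by_cases hz : z = z0
  · simp [hz]
  · simp [Finsupp.erase_ne hz]

theorem isAUDProjection_smashMapRange (he : IsAUDProjection e m) {Y : Type*} (y0 : Y) :
    IsAUDProjection (smashMapRange y0 e) m :=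
  he.of_pointwise (fun y => (Finsupp.applyAddHom y).comp (Smash Y y0 A).subtype)
    (fun _ hf => Subtype.ext (Finsupp.ext hf)) (smashMapRange y0) fun _ _ _ => rfl

variable {D : Type u} [Category.{v} D] (F : D ⥤ Pointed.{w})

noncomputable def glimMapRange (φ : A →+ B) : glim F A →+ glim F B where
  toFun h := ⟨fun d => smashMapRange _ φ (h.1 d), fun d d' u => by
    rw [smashMap_smashMapRange, h.2 u]⟩
  map_zero' := Subtype.ext <| funext fun _ => map_zero _
  map_add' _ _ := Subtype.ext <| funext fun _ => map_add _ _ _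

theorem rho_smashMapRange (φ : A →+ B) (f : Smash (plim F) (plimPt F) A) :
    rho F B (smashMapRange _ φ f) = glimMapRange F φ (rho F A f) :=
  Subtype.ext <| funext fun _ => smashMap_smashMapRange _ _ _ φ f

theorem isAUDProjection_glimMapRange (he : IsAUDProjection e m) :
    IsAUDProjection (glimMapRange F e : glim F A →+ glim F A) m :=
  he.of_pointwise (fun (i : Σ d, (F.obj d).X) => (Finsupp.applyAddHom i.2).comp
      ((Smash _ _ A).subtype.comp ((Pi.evalAddMonoidHom _ i.1).comp (glim F A).subtype)))
    (fun _ hh => Subtype.ext <| funext fun d => Subtype.ext <| Finsupp.ext fun y => hh ⟨d, y⟩)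
    (glimMapRange F) fun _ _ _ => rfl

end Pointwise

/-- Let `A` be an abelian group, `D` a small category and `F : D ⥤ Set_*` a diagram of
pointed sets.  If `A` is almost uniquely divisible (`A = Q ⊕ B` with `Q` uniquely
divisible and `B` bounded), then the kernel and the cokernel of the natural map
`ρ : (lim_D F) ∧ A → lim_D (F ∧ A)` are almost uniquely divisible. -/
theorem stmt6 {D : Type u} [Category.{v} D] (F : D ⥤ Pointed.{w})
    {A : Type*} [AddCommGroup A] (hA : AlmostUniquelyDivisible A) :
    AlmostUniquelyDivisible (rho F A).ker ∧
      AlmostUniquelyDivisible (↥(glim F A) ⧸ (rho F A).range) := by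
  obtain ⟨e, m, hm, he⟩ := hA.exists_isAUDProjection
  have hρ := rho_smashMapRange F e
  have hsrc := isAUDProjection_smashMapRange he (plimPt F)
  have htgt := isAUDProjection_glimMapRange F he
  obtain ⟨_, hK⟩ := hsrc.exists_ker htgt hρ
  obtain ⟨_, hC⟩ := hsrc.exists_coker htgt hρ
  exact ⟨hK.almostUniquelyDivisible hm, hC.almostUniquelyDivisible hm⟩
end

section
/- Let A be an abelian group, 𝒯 a directed poset and X : 𝒯 → Set_* a diagram of pointed sets. Then the natural map ρ : (lim_𝒯 X)∧A → lim_𝒯(X∧A) is injective. -/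
open CategoryTheory Finsupp

universe u v w

/-!
Only finitely many points of `lim X` carry a nonzero coefficient of `f`. Two distinct points
of the limit already differ at some stage, hence at every later stage, so by directedness a
single stage `t` separates all of them (together with the basepoint). The projection to `X t`
is then injective on the support of `f`, so `(π_t)_* f` has the same coefficients as `f`, and
`ρ f = 0` forces `f = 0`.
-/

theorem exists_injOn_of_directed {ι Y : Type*} {Z : ι → Type*} [Preorder ι]
    [IsDirected ι (· ≤ ·)] [Nonempty ι] (g : ∀ i, Y → Z i)
    (hmono : ∀ ⦃i j⦄, i ≤ j → ∀ ⦃x y⦄, g j x = g j y → g i x = g i y)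
    (hsep : ∀ ⦃x y⦄, (∀ i, g i x = g i y) → x = y) (S : Finset Y) :
    ∃ i, Set.InjOn (g i) S := by
  have heventually : ∀ x y, x ≠ y → ∀ᶠ i in Filter.atTop, g i x ≠ g i y := by
    intro x y hne
    obtain ⟨i₀, hi₀⟩ : ∃ i, g i x ≠ g i y := by
      by_contra! h
      exact hne (hsep h)
    exact Filter.eventually_atTop.2 ⟨i₀, fun j hj hj_eq => hi₀ (hmono hj hj_eq)⟩
  have hall : ∀ᶠ i in Filter.atTop, ∀ x ∈ S, ∀ y ∈ S, x ≠ y → g i x ≠ g i y := by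
    simp only [Filter.eventually_all_finset, Filter.eventually_imp_distrib_left]
    exact fun x _ y _ hne => heventually x y hne
  obtain ⟨i, hi⟩ := hall.exists
  exact ⟨i, fun x hx y hy hxy => by_contra fun hne => hi x hx y hy hne hxy⟩

theorem smashMap_eq_zero_iff_of_injOn {Y Z : Type*} {y0 : Y} {z0 : Z} {g : Y → Z}
    {A : Type*} [AddCommGroup A] {f : Smash Y y0 A} (hg0 : g y0 = z0)
    (hg : Set.InjOn g (insert y0 f.1.support)) : smashMap y0 z0 g A f = 0 ↔ f = 0 := by
  refine ⟨fun hf => ?_, fun hf => hf ▸ map_zero _⟩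
  ext x
  by_contra hx
  have hx_supp : x ∈ f.1.support := mem_support_iff.2 hx
  have hx_ne : x ≠ y0 := fun h => hx (h ▸ f.2)
  have hgx : g x ≠ z0 :=
    hg0 ▸ hg.ne (Set.mem_insert_of_mem _ hx_supp) (Set.mem_insert _ _) hx_ne
  have hcoeff : ((mapDomain g f.1).erase z0) (g x) = 0 := congrArg (fun h => h.1 (g x)) hf
  rw [erase_ne hgx, mapDomain_apply' _ _ (Set.subset_insert _ _) hg
    (Set.mem_insert_of_mem _ hx_supp)] at hcoeff
  exact hx hcoeff

section DirectedLimit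

variable {T : Type*} [Preorder T] {F : Tᵒᵖ ⥤ Pointed}

theorem plim_ext {x y : plim F} (h : ∀ t, x.1 (Opposite.op t) = y.1 (Opposite.op t)) :
    x = y :=
  Subtype.ext (funext fun d => h d.unop)

theorem plim_apply_eq_of_le {x y : plim F} {s t : T} (hst : s ≤ t)
    (h : x.1 (Opposite.op t) = y.1 (Opposite.op t)) :
    x.1 (Opposite.op s) = y.1 (Opposite.op s) := by
  rw [← x.2 (homOfLE hst).op, ← y.2 (homOfLE hst).op, h]

end DirectedLimit

/-- Let `A` be an abelian group, `T` a directed poset and `F` a diagram of pointed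
sets indexed by `T` (with structure maps `X(t) → X(s)` for `t ≥ s`, i.e. a functor
`Tᵒᵖ ⥤ Set_*`).  Then the natural map `ρ : (lim_T X) ∧ A → lim_T (X ∧ A)` is
injective. -/
theorem stmt7 {T : Type u} [PartialOrder T] [IsDirected T (· ≤ ·)] [Nonempty T]
    (F : Tᵒᵖ ⥤ Pointed.{w}) (A : Type*) [AddCommGroup A] :
    Function.Injective (rho F A) := by
  classical
  rw [injective_iff_map_eq_zero]
  intro f hf
  obtain ⟨t, ht⟩ := exists_injOn_of_directed (fun t (x : plim F) => x.1 (Opposite.op t))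
    (fun _ _ hst _ _ => plim_apply_eq_of_le hst) (fun _ _ => plim_ext)
    (insert (plimPt F) f.1.support)
  rw [Finset.coe_insert] at ht
  exact (smashMap_eq_zero_iff_of_injOn rfl ht).1 (congrArg (fun h => h.1 (Opposite.op t)) hf)
end

section
/- Let A be an abelian group, 𝒯 a directed poset and X : 𝒯 → Set_* a diagram of pointed sets. An element h ∈ lim_𝒯(X∧A) lies in the image of the natural map ρ : (lim_𝒯 X)∧A → lim_𝒯(X∧A) if and only if the set of cardinalities {|supp(h(t))| : t ∈ 𝒯} is bounded above, where supp(h(t)) = {a ∈ X(t) : h(t)_a ≠ 0}. -/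
/-!
The support of `ρ(f)(t)` is the image of the support of `f`, so elements of the image of `ρ` have
bounded supports. Conversely, `h(s)` is a pushforward of `h(t)` for `s ≤ t`, so the support sizes
of `h` grow along `𝒯`; if they are bounded they are constant beyond some `t₀`, and there the
structure maps restrict to bijections between supports. Hence each `a` in the support of `h(t₀)`
lies on a unique thread of `lim X` running through the supports beyond `t₀`. Pushing `h(t₀)`
forward along `a ↦ thread` gives `f` with `ρ(f)(t) = h(t)` for `t ≥ t₀`, because `h(t₀)` is the
pushforward of `h(t)` and the thread through `φ_{t,t₀}(b)` passes through `b`; as `𝒯` is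
directed, this forces `ρ(f) = h`.
-/

open CategoryTheory Finsupp

universe u v w

open Opposite

section SmashMap

variable {Y Z : Type*} {y0 : Y} {z0 : Z} {A : Type*} [AddCommGroup A]

theorem coe_smashMap (g : Y → Z) (f : Smash Y y0 A) :
    (smashMap y0 z0 g A f).1 = (f.1.mapDomain g).erase z0 := rfl

theorem support_smashMap_subset [DecidableEq Z] (g : Y → Z) (f : Smash Y y0 A) :
    (smashMap y0 z0 g A f).1.support ⊆ f.1.support.image g := by
  rw [coe_smashMap, Finsupp.support_erase]
  exact (Finset.erase_subset _ _).trans Finsupp.mapDomain_support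

theorem card_support_smashMap_le (g : Y → Z) (f : Smash Y y0 A) :
    (smashMap y0 z0 g A f).1.support.card ≤ f.1.support.card := by
  classical
  exact (Finset.card_le_card (support_smashMap_subset g f)).trans Finset.card_image_le

theorem image_support_eq_of_card_support_smashMap_eq [DecidableEq Z] {g : Y → Z}
    {f : Smash Y y0 A} (hcard : (smashMap y0 z0 g A f).1.support.card = f.1.support.card) :
    f.1.support.image g = (smashMap y0 z0 g A f).1.support :=
  (Finset.eq_of_subset_of_card_le (support_smashMap_subset g f)
    (Finset.card_image_le.trans hcard.ge)).symm

theorem injOn_support_of_card_support_smashMap_eq {g : Y → Z} {f : Smash Y y0 A}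
    (hcard : (smashMap y0 z0 g A f).1.support.card = f.1.support.card) :
    Set.InjOn g f.1.support := by
  classical
  apply Finset.injOn_of_card_image_eq
  rw [image_support_eq_of_card_support_smashMap_eq hcard, hcard]

theorem smashMap_congr {g g' : Y → Z} {f : Smash Y y0 A}
    (hgg' : ∀ y ∈ f.1.support, g y = g' y) :
    smashMap y0 z0 g A f = smashMap y0 z0 g' A f :=
  Subtype.ext (by rw [coe_smashMap, coe_smashMap, Finsupp.mapDomain_congr hgg'])

theorem smashMap_id (f : Smash Y y0 A) : smashMap y0 y0 id A f = f := by
  refine Subtype.ext ?_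
  rw [coe_smashMap, Finsupp.mapDomain_id]
  exact Finsupp.erase_of_notMem_support (Finsupp.notMem_support_iff.2 f.2)

end SmashMap

section InverseSystem

variable {T : Type*} [PartialOrder T] {F : Tᵒᵖ ⥤ Pointed.{w}} {A : Type*} [AddCommGroup A]

variable (F) in
/-- The structure map `φ_{t,s}`. -/
def transitionMap {s t : T} (hst : s ≤ t) : (F.obj (op t)).X → (F.obj (op s)).X :=
  (F.map (homOfLE hst).op).toFun

theorem transitionMap_self (t : T) (x : (F.obj (op t)).X) : transitionMap F (le_refl t) x = x := by
  change (F.map (𝟙 (op t))).toFun x = x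
  rw [F.map_id]
  rfl

theorem transitionMap_transitionMap {r s t : T} (hrs : r ≤ s) (hst : s ≤ t)
    (x : (F.obj (op t)).X) :
    transitionMap F hrs (transitionMap F hst x) = transitionMap F (hrs.trans hst) x := by
  change _ = (F.map ((homOfLE hst).op ≫ (homOfLE hrs).op)).toFun x
  rw [F.map_comp]
  rfl

theorem mem_plim_iff {x : ∀ d, (F.obj d).X} :
    x ∈ plim F ↔ ∀ ⦃s t : T⦄ (hst : s ≤ t), transitionMap F hst (x (op t)) = x (op s) :=
  ⟨fun hx _ _ hst => hx (homOfLE hst).op, fun H _ _ u => H (leOfHom u.unop)⟩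

theorem glim_transitionMap (h : glim F A) {s t : T} (hst : s ≤ t) :
    smashMap _ _ (transitionMap F hst) A (h.1 (op t)) = h.1 (op s) :=
  h.2 (homOfLE hst).op

theorem card_support_glim_mono (h : glim F A) {s t : T} (hst : s ≤ t) :
    (h.1 (op s)).1.support.card ≤ (h.1 (op t)).1.support.card := by
  rw [← glim_transitionMap h hst]
  exact card_support_smashMap_le _ _

variable [IsDirected T (· ≤ ·)]

theorem exists_mem_plim_extend (t0 : T) (y : ∀ t, t0 ≤ t → (F.obj (op t)).X)
    (hy : ∀ ⦃s t⦄ (hs : t0 ≤ s) (hst : s ≤ t),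
      transitionMap F hst (y t (hs.trans hst)) = y s hs) :
    ∃ x ∈ plim F, ∀ t (ht : t0 ≤ t), x (op t) = y t ht := by
  choose up hup hup0 using fun s : T => directed_of (· ≤ ·) s t0
  have hwd : ∀ s t (hst : s ≤ t) (ht : t0 ≤ t),
      transitionMap F hst (y t ht) = transitionMap F (hup s) (y (up s) (hup0 s)) := by
    intro s t hst ht
    obtain ⟨w, htw, huw⟩ := directed_of (· ≤ ·) t (up s)
    rw [← hy ht htw, ← hy (hup0 s) huw, transitionMap_transitionMap,
      transitionMap_transitionMap]
  refine ⟨fun d => transitionMap F (hup d.unop) (y _ (hup0 d.unop)),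
    mem_plim_iff.2 fun s t hst => ?_, fun t ht => ?_⟩
  · rw [transitionMap_transitionMap]
    exact hwd s _ _ _
  · exact (hwd t t le_rfl ht).symm.trans (transitionMap_self t _)

theorem glim_ext_of_ge {h h' : glim F A} (t0 : T)
    (H : ∀ t, t0 ≤ t → h.1 (op t) = h'.1 (op t)) : h = h' := by
  refine Subtype.ext (funext fun d => ?_)
  obtain ⟨t, hdt, ht⟩ := directed_of (· ≤ ·) d.unop t0
  change h.1 (op d.unop) = h'.1 (op d.unop)
  rw [← glim_transitionMap h hdt, ← glim_transitionMap h' hdt, H t ht]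

end InverseSystem

section StableSupports

variable {T : Type*} [PartialOrder T] {F : Tᵒᵖ ⥤ Pointed.{w}} {A : Type*} [AddCommGroup A]
  {h : glim F A} {t0 : T}

theorem card_support_smashMap_transitionMap_eq
    (hmax : ∀ t, (h.1 (op t)).1.support.card ≤ (h.1 (op t0)).1.support.card)
    {s t : T} (hs : t0 ≤ s) (hst : s ≤ t) :
    (smashMap (F.obj (op t)).point (F.obj (op s)).point (transitionMap F hst) A
      (h.1 (op t))).1.support.card = (h.1 (op t)).1.support.card := by
  rw [glim_transitionMap h hst]
  exact le_antisymm (card_support_glim_mono h hst) ((hmax t).trans (card_support_glim_mono h hs))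

theorem injOn_transitionMap_support
    (hmax : ∀ t, (h.1 (op t)).1.support.card ≤ (h.1 (op t0)).1.support.card)
    {s t : T} (hs : t0 ≤ s) (hst : s ≤ t) :
    Set.InjOn (transitionMap F hst) (h.1 (op t)).1.support :=
  injOn_support_of_card_support_smashMap_eq (card_support_smashMap_transitionMap_eq hmax hs hst)

theorem mem_support_iff_exists_transitionMap_eq
    (hmax : ∀ t, (h.1 (op t)).1.support.card ≤ (h.1 (op t0)).1.support.card)
    {s t : T} (hs : t0 ≤ s) (hst : s ≤ t) {a : (F.obj (op s)).X} :
    a ∈ (h.1 (op s)).1.support ↔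
      ∃ b ∈ (h.1 (op t)).1.support, transitionMap F hst b = a := by
  classical
  rw [← Finset.mem_image, image_support_eq_of_card_support_smashMap_eq
    (card_support_smashMap_transitionMap_eq hmax hs hst), glim_transitionMap]

variable [IsDirected T (· ≤ ·)]

theorem exists_mem_plim_through_support
    (hmax : ∀ t, (h.1 (op t)).1.support.card ≤ (h.1 (op t0)).1.support.card)
    {a : (F.obj (op t0)).X} (ha : a ∈ (h.1 (op t0)).1.support) :
    ∃ x ∈ plim F, x (op t0) = a ∧ ∀ t, t0 ≤ t → x (op t) ∈ (h.1 (op t)).1.support := by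
  choose y hy_mem hy_eq using fun t (ht : t0 ≤ t) =>
    (mem_support_iff_exists_transitionMap_eq hmax le_rfl ht).1 ha
  obtain ⟨x, hx, hxy⟩ := exists_mem_plim_extend t0 y fun s t hs hst =>
    injOn_transitionMap_support hmax le_rfl hs
      ((mem_support_iff_exists_transitionMap_eq hmax hs hst).2 ⟨_, hy_mem t _, rfl⟩)
      (hy_mem s hs)
      (by rw [transitionMap_transitionMap, hy_eq, hy_eq])
  refine ⟨x, hx, ?_, fun t ht => hxy t ht ▸ hy_mem t ht⟩
  rw [hxy t0 le_rfl, ← hy_eq t0 le_rfl, transitionMap_self]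

theorem mem_range_rho_of_forall_card_support_le
    (hmax : ∀ t, (h.1 (op t)).1.support.card ≤ (h.1 (op t0)).1.support.card) :
    h ∈ (rho F A).range := by
  classical
  choose x hx hx_t0 hx_mem using fun a (ha : a ∈ (h.1 (op t0)).1.support) =>
    exists_mem_plim_through_support hmax ha
  let lift (a : (F.obj (op t0)).X) : plim F :=
    if ha : a ∈ (h.1 (op t0)).1.support then ⟨x a ha, hx a ha⟩ else plimPt F
  have lift_point : lift (F.obj (op t0)).point = plimPt F :=
    dif_neg (Finsupp.notMem_support_iff.2 (h.1 (op t0)).2)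
  refine ⟨smashMap _ (plimPt F) lift A (h.1 (op t0)), glim_ext_of_ge t0 fun t ht => ?_⟩
  have lift_transitionMap :
      ∀ b ∈ (h.1 (op t)).1.support, (lift (transitionMap F ht b)).1 (op t) = b := by
    intro b hb
    have ha := (mem_support_iff_exists_transitionMap_eq hmax le_rfl ht).2 ⟨b, hb, rfl⟩
    simp only [lift, dif_pos ha]
    exact injOn_transitionMap_support hmax le_rfl ht (hx_mem _ ha t ht) hb
      (by rw [mem_plim_iff.1 (hx _ ha), hx_t0])
  calc (rho F A (smashMap _ (plimPt F) lift A (h.1 (op t0)))).1 (op t)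
      = smashMap _ _ ((fun y : plim F => y.1 (op t)) ∘ lift) A (h.1 (op t0)) :=
        smashMap_comp _ _ _ _ _ rfl A _
    _ = smashMap _ _ ((fun y : plim F => y.1 (op t)) ∘ lift ∘ transitionMap F ht) A
          (h.1 (op t)) := by
        have hpoint : ((fun y : plim F => y.1 (op t)) ∘ lift) (F.obj (op t0)).point
            = (F.obj (op t)).point := by
          rw [Function.comp_apply, lift_point]
          rfl
        rw [← glim_transitionMap h ht, smashMap_comp _ _ _ _ _ hpoint A _]
        rfl
    _ = smashMap _ _ id A (h.1 (op t)) := smashMap_congr lift_transitionMap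
    _ = h.1 (op t) := smashMap_id _

end StableSupports

/-- Let `A` be an abelian group, `T` a directed poset and `F : Tᵒᵖ ⥤ Set_*` a diagram
of pointed sets.  An element `h ∈ lim_T (X ∧ A)` lies in the image of the natural map
`ρ : (lim_T X) ∧ A → lim_T (X ∧ A)` iff the set of cardinalities
`{|supp (h t)| : t ∈ T}` is bounded above. -/
theorem stmt8 {T : Type u} [PartialOrder T] [IsDirected T (· ≤ ·)] [Nonempty T]
    (F : Tᵒᵖ ⥤ Pointed.{w}) (A : Type*) [AddCommGroup A] (h : glim F A) :
    h ∈ (rho F A).range ↔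
      ∃ N : ℕ, ∀ t : T, (h.1 (Opposite.op t)).1.support.card ≤ N := by
  constructor
  · rintro ⟨f, rfl⟩
    exact ⟨f.1.support.card, fun t => card_support_smashMap_le _ f⟩
  · rintro ⟨N, hN⟩
    have hbdd : BddAbove (Set.range fun t : T => (h.1 (op t)).1.support.card) :=
      ⟨N, Set.forall_mem_range.2 hN⟩
    obtain ⟨_, ⟨t0, rfl⟩, ht0⟩ := hbdd.exists_isGreatest_of_nonempty (Set.range_nonempty _)
    exact mem_range_rho_of_forall_card_support_le fun t => ht0 ⟨t, rfl⟩
end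

section
/- Let A be an abelian group, 𝒯 a directed poset and X : 𝒯 → Set_* a diagram of pointed sets. If A is torsion free, then the cokernel H(X,A) = lim_𝒯(X∧A) / ρ((lim_𝒯 X)∧A) of the natural map ρ is torsion free. -/
open CategoryTheory Finsupp

universe u v w

/-! Suppose `ρ f = n • h`. Choose a stage `t` at which the projection `lim X → X t` is injective on
the finite set `supp f ∪ {*}`; directedness provides one. Reading `ρ f = n • h` at `t` then gives
`f x = n • h_t(x_t)` for every `x` in the support, so `f = n • g` with `g x = h_t(x_t)`. Hence
`n • (ρ g - h) = 0`, and `ρ g = h` because `lim (X ∧ A)` is torsion free along with `A`. So the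
range of `ρ` is pure, which is torsion-freeness of the cokernel. -/

theorem IsAddTorsionFree.of_nsmul_eq_zero {G : Type*} [AddCommGroup G]
    (h : ∀ (a : G) (n : ℕ), n ≠ 0 → n • a = 0 → a = 0) : IsAddTorsionFree G :=
  .of_not_isOfFinAddOrder fun a ha hfin =>
    let ⟨n, hn, hna⟩ := hfin.exists_nsmul_eq_zero
    ha (h a n hn.ne' hna)

theorem QuotientAddGroup.isAddTorsionFree_of_nsmul_mem {G : Type*} [AddCommGroup G]
    {H : AddSubgroup G} (h : ∀ (g : G) (n : ℕ), n ≠ 0 → n • g ∈ H → g ∈ H) :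
    IsAddTorsionFree (G ⧸ H) :=
  .of_nsmul_eq_zero fun x n hn hx => by
    induction x using QuotientAddGroup.induction_on with
    | H g => exact (eq_zero_iff g).2 (h g n hn ((eq_zero_iff (n • g)).1 hx))

theorem Finsupp.exists_nsmul_eq {Y A : Type*} [AddMonoid A] (f : Y →₀ A) (n : ℕ)
    (hf : ∀ y ∈ f.support, ∃ a, n • a = f y) : ∃ g : Y →₀ A, n • g = f := by
  classical
  choose! a ha using hf
  refine ⟨.onFinset f.support (fun y => if y ∈ f.support then a y else 0) fun y hy => ?_, ?_⟩
  · by_contra hys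
    simp [hys] at hy
  · ext y
    by_cases hys : y ∈ f.support
    · rw [Finsupp.smul_apply, Finsupp.onFinset_apply, if_pos hys, ha y hys]
    · rw [Finsupp.smul_apply, Finsupp.onFinset_apply, if_neg hys, smul_zero,
        Finsupp.notMem_support_iff.mp hys]

theorem smashMap_apply_of_injOn {Y : Type u} {Z : Type v} {y0 : Y} {z0 : Z} {g : Y → Z}
    (hg : g y0 = z0) {A : Type w} [AddCommGroup A] {f : Smash Y y0 A}
    (hinj : Set.InjOn g (insert y0 (f.1.support : Set Y))) {y : Y} (hy : y ∈ f.1.support) :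
    (smashMap y0 z0 g A f).1 (g y) = f.1 y := by
  have hy0 : y ≠ y0 := fun h => Finsupp.mem_support_iff.mp hy (h ▸ f.2)
  have hgy : g y ≠ z0 := fun h =>
    hy0 (hinj (Set.mem_insert_of_mem _ hy) (Set.mem_insert _ _) (h.trans hg.symm))
  show ((Finsupp.mapDomain g f.1).erase z0) (g y) = f.1 y
  rw [Finsupp.erase_ne hgy]
  exact Finsupp.mapDomain_apply' _ _ (Set.subset_insert _ _) hinj (Set.mem_insert_of_mem _ hy)

section DirectedLimit

variable {T : Type u} [Preorder T] (F : Tᵒᵖ ⥤ Pointed.{w})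

theorem plim_ne_of_le {x y : plim F} {t t' : T} (hne : x.1 (.op t) ≠ y.1 (.op t))
    (hle : t ≤ t') : x.1 (.op t') ≠ y.1 (.op t') := fun h =>
  hne (by rw [← x.2 (homOfLE hle).op, ← y.2 (homOfLE hle).op, h])

theorem plim_exists_injOn [IsDirected T (· ≤ ·)] [Nonempty T] (S : Finset (plim F)) :
    ∃ t : T, Set.InjOn (fun x : plim F => x.1 (.op t)) S := by
  classical
  have hsep (p : plim F × plim F) : ∃ t : T, p.1 ≠ p.2 → p.1.1 (.op t) ≠ p.2.1 (.op t) := by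
    by_cases hp : p.1 = p.2
    · exact ⟨Classical.arbitrary T, fun h => absurd hp h⟩
    · obtain ⟨d, hd⟩ := Function.ne_iff.mp fun h => hp (Subtype.ext h)
      exact ⟨d.unop, fun _ => hd⟩
  choose τ hτ using hsep
  obtain ⟨t, ht⟩ := ((S ×ˢ S).image τ).exists_le
  refine ⟨t, fun x hx y hy hxy => by_contra fun hne => ?_⟩
  exact plim_ne_of_le F (hτ (x, y) hne)
    (ht _ (Finset.mem_image_of_mem τ (Finset.mem_product.2 ⟨hx, hy⟩))) hxy

variable [IsDirected T (· ≤ ·)] [Nonempty T] {A : Type*} [AddCommGroup A] [IsAddTorsionFree A]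

theorem mem_range_rho_of_nsmul_mem {h : glim F A} {n : ℕ} (hn : n ≠ 0)
    (hnh : n • h ∈ (rho F A).range) : h ∈ (rho F A).range := by
  classical
  obtain ⟨f, hf⟩ := hnh
  obtain ⟨t, ht⟩ := plim_exists_injOn F (insert (plimPt F) f.1.support)
  have hdiv : ∀ x ∈ f.1.support, ∃ a, n • a = f.1 x := fun x hx =>
    ⟨(h.1 (.op t)).1 (x.1 (.op t)), by
      rw [← smashMap_apply_of_injOn rfl (by simpa using ht) hx]
      exact (congrArg (fun k : glim F A => (k.1 (.op t)).1 (x.1 (.op t))) hf).symm⟩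
  obtain ⟨g, hg⟩ := f.1.exists_nsmul_eq n hdiv
  have hg0 : g (plimPt F) = 0 := nsmul_right_injective hn <| by
    simpa only [smul_zero, ← Finsupp.smul_apply, hg] using mem_smash.1 f.2
  refine ⟨⟨g, hg0⟩, nsmul_right_injective hn ?_⟩
  simp only [← map_nsmul, ← hf]
  congr 1
  exact Subtype.ext hg

end DirectedLimit

/-- Let `A` be an abelian group, `T` a directed poset and `F : Tᵒᵖ ⥤ Set_*` a diagram
of pointed sets.  If `A` is torsion free then the cokernel
`H(X,A) = lim_T(X∧A) / ρ((lim_T X)∧A)` of the natural map `ρ` is torsion free. -/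
theorem stmt9 {T : Type u} [PartialOrder T] [IsDirected T (· ≤ ·)] [Nonempty T]
    (F : Tᵒᵖ ⥤ Pointed.{w}) (A : Type*) [AddCommGroup A]
    (hA : ∀ (a : A) (n : ℕ), n ≠ 0 → n • a = 0 → a = 0) :
    ∀ (x : ↥(glim F A) ⧸ (rho F A).range) (n : ℕ), n ≠ 0 → n • x = 0 → x = 0 := by
  have := IsAddTorsionFree.of_nsmul_eq_zero hA
  have := QuotientAddGroup.isAddTorsionFree_of_nsmul_mem fun _ _ hn =>
    mem_range_rho_of_nsmul_mem F (A := A) hn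
  exact fun x n hn => (nsmul_eq_zero_iff_right hn).1
end

section
/- Let A be an abelian group, 𝒯 a directed poset and X : 𝒯 → Set_* a diagram of pointed sets such that X(t) is finite for every t ∈ 𝒯. If A is p-divisible for a prime p (pA = A), then G(X,A) = lim_𝒯(X∧A) and the cokernel H(X,A) of the natural map ρ are p-divisible. Consequently, if A is divisible then G(X,A) and H(X,A) are divisible. -/
open CategoryTheory Finsupp

universe u v w

/-!
Since every `X(t)` is finite, `lim X` is a profinite set. An element `g` of `G(X, A)` pairs
with a locally constant `f = φ ∘ π_t : lim X → ℤ` by `∑_y (φ y - φ *) • g(t)(y)`; this does not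
depend on the factorization of `f`, because `g(t)` is supported on the image of `lim X` (a
Mittag-Leffler argument for the finite system `X`). The result is a homomorphism
`LC(lim X, ℤ) → A` from which `g` is recovered by evaluating on the indicators of the cylinders
`π_t⁻¹(y)`, and this recovery is additive. By Nöbeling's theorem `LC(lim X, ℤ)` is free, so a
homomorphism from it into a `p`-divisible group is `p` times another one; hence `g` is
divisible by `p` in `G(X, A)`, and divisibility passes to the quotient `H(X, A)`.
-/

section WeightedSum

variable {Y : Type*} {A : Type*} [AddCommGroup A]

noncomputable def weightedSum (w : Y → ℤ) : (Y →₀ A) →+ A :=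
  Finsupp.liftAddHom fun y => zsmulAddGroupHom (w y)

theorem weightedSum_apply (w : Y → ℤ) (f : Y →₀ A) :
    weightedSum w f = f.sum fun y a => w y • a :=
  Finsupp.liftAddHom_apply _ _

theorem weightedSum_single (w : Y → ℤ) (y : Y) (a : A) :
    weightedSum w (Finsupp.single y a) = w y • a :=
  Finsupp.liftAddHom_apply_single _ _ _

theorem weightedSum_congr {w w' : Y → ℤ} {f : Y →₀ A} (h : ∀ y ∈ f.support, w y = w' y) :
    weightedSum w f = weightedSum w' f := by
  simp only [weightedSum_apply]
  exact Finsupp.sum_congr fun y hy => by rw [h y hy]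

theorem weightedSum_mapDomain {Z : Type*} (φ : Z → Y) (w : Y → ℤ) (f : Z →₀ A) :
    weightedSum w (f.mapDomain φ) = weightedSum (w ∘ φ) f := by
  simp only [weightedSum_apply]
  exact Finsupp.sum_mapDomain_index (fun _ => smul_zero _) fun _ _ _ => smul_add _ _ _

theorem weightedSum_erase {w : Y → ℤ} {y₀ : Y} (hw : w y₀ = 0) (f : Y →₀ A) :
    weightedSum w (f.erase y₀) = weightedSum w f := by
  conv_rhs => rw [← Finsupp.erase_add_single y₀ f]
  rw [map_add, weightedSum_single, hw, zero_smul, add_zero]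

theorem weightedSum_add_weights (w w' : Y → ℤ) (f : Y →₀ A) :
    weightedSum (w + w') f = weightedSum w f + weightedSum w' f := by
  simp only [weightedSum_apply, Pi.add_apply, add_smul, Finsupp.sum_add]

theorem weightedSum_indicator [DecidableEq Y] (y : Y) (f : Y →₀ A) :
    weightedSum (fun e => if e = y then 1 else 0) f = f y := by
  simp only [weightedSum_apply, ite_smul, one_smul, zero_smul]
  exact Finsupp.sum_ite_self_eq' f y

end WeightedSum

theorem AddMonoidHom.exists_nsmul_eq_of_projective {M A : Type*} [AddCommGroup M]
    [Module.Projective ℤ M] [AddCommGroup A] {n : ℕ} (hA : ∀ a : A, ∃ b, n • b = a)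
    (φ : M →+ A) : ∃ ψ : M →+ A, n • ψ = φ := by
  obtain ⟨ψ, hψ⟩ := Module.projective_lifting_property (n • LinearMap.id : A →ₗ[ℤ] A)
    φ.toIntLinearMap fun a => by simpa using hA a
  exact ⟨ψ.toAddMonoidHom, AddMonoidHom.ext fun x => by simpa using LinearMap.congr_fun hψ x⟩

theorem QuotientAddGroup.exists_nsmul_eq {G : Type*} [AddCommGroup G] {N : AddSubgroup G}
    {n : ℕ} (h : ∀ g : G, ∃ g', n • g' = g) (x : G ⧸ N) : ∃ y, n • y = x := by
  induction x using QuotientAddGroup.induction_on with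
  | H g =>
    obtain ⟨g', rfl⟩ := h g
    exact ⟨g', rfl⟩

theorem Finsupp.mapDomain_apply_eq_sum_fiber {α β M : Type*} [Fintype α] [DecidableEq β]
    [AddCommMonoid M] (φ : α → β) (f : α →₀ M) (b : β) :
    f.mapDomain φ b = ∑ a with φ a = b, f a := by
  rw [Finsupp.mapDomain, Finsupp.sum_apply, Finsupp.sum_fintype _ _ (by simp),
    Finset.sum_filter]
  simp only [Finsupp.single_apply]

local instance (X : Pointed) : TopologicalSpace X.X := ⊥

local instance (X : Pointed) : DiscreteTopology X.X := ⟨rfl⟩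

section Topology

variable {J : Type u} [Category.{v} J] (F : J ⥤ Pointed.{w})

def plimProj (j : J) : C(plim F, (F.obj j).X) :=
  ⟨fun z => z.1 j, (continuous_apply j).comp continuous_subtype_val⟩

theorem isClosed_plim : IsClosed (plim F) := by
  simp only [plim, Set.ofPred_forall]
  exact isClosed_iInter fun j => isClosed_iInter fun j' => isClosed_iInter fun u =>
    isClosed_eq (continuous_of_discreteTopology.comp (continuous_apply j)) (continuous_apply j')

instance [∀ j, Finite (F.obj j).X] : CompactSpace (plim F) :=
  isCompact_iff_compactSpace.mp (isClosed_plim F).isCompact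

instance [∀ j, Finite (F.obj j).X] : Module.Free ℤ (LocallyConstant (plim F) ℤ) :=
  LocallyConstant.freeOfProfinite (Profinite.of (plim F))

variable [IsCofiltered J]

theorem exists_plimProj_preimage_subset {U : Set (plim F)} (hU : IsOpen U) {z : plim F}
    (hz : z ∈ U) : ∃ j, plimProj F j ⁻¹' {plimProj F j z} ⊆ U := by
  obtain ⟨V, hV, rfl⟩ := isOpen_induced_iff.mp hU
  obtain ⟨I, W, hW, hIW⟩ := isOpen_pi_iff.mp hV z.1 hz
  obtain ⟨j, hj⟩ := IsCofiltered.inf_objs_exists I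
  refine ⟨j, fun z' hz' => hIW fun i hi => ?_⟩
  obtain ⟨u⟩ := hj hi
  have hz' : z'.1 j = z.1 j := hz'
  rw [← z'.2 u, hz', z.2 u]
  exact (hW i hi).2

theorem LocallyConstant.exists_factorsThrough_plimProj [∀ j, Finite (F.obj j).X] {α : Type*}
    (f : LocallyConstant (plim F) α) : ∃ j, Function.FactorsThrough f (plimProj F j) := by
  classical
  choose jz hjz using fun z : plim F =>
    exists_plimProj_preimage_subset F (f.isLocallyConstant {f z}) (Set.mem_singleton (f z))
  obtain ⟨Z, -, hZ⟩ := isCompact_univ.elim_nhds_subcover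
    (fun z => plimProj F (jz z) ⁻¹' {plimProj F (jz z) z})
    fun z _ => ((isOpen_discrete _).preimage (plimProj F (jz z)).continuous).mem_nhds rfl
  obtain ⟨j, hj⟩ := IsCofiltered.inf_objs_exists (Z.image jz)
  refine ⟨j, fun z₁ z₂ h => ?_⟩
  obtain ⟨z, hzZ, hz₁⟩ := Set.mem_iUnion₂.mp (hZ (Set.mem_univ z₁))
  obtain ⟨u⟩ := hj (Finset.mem_image_of_mem jz hzZ)
  have hz₂ : z₂ ∈ plimProj F (jz z) ⁻¹' {plimProj F (jz z) z} := by
    rw [← hz₁]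
    show z₂.1 (jz z) = z₁.1 (jz z)
    rw [← z₁.2 u, ← z₂.2 u, show z₁.1 j = z₂.1 j from h]
  exact (hjz z hz₁).trans (hjz z hz₂).symm

end Topology

section Glim

variable {J : Type u} [Category.{v} J] {F : J ⥤ Pointed.{w}} {A : Type*} [AddCommGroup A]

theorem exists_plim_eval_eq_of_mem_eventualRange [IsCofilteredOrEmpty J]
    [∀ j, Finite (F.obj j).X] {j : J} {y : (F.obj j).X}
    (hy : y ∈ (F ⋙ forget Pointed).eventualRange j) : ∃ z : plim F, z.1 j = y := by
  set K := F ⋙ forget Pointed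
  have : ∀ j, Finite (K.obj j) := fun j => inferInstanceAs (Finite (F.obj j).X)
  have : ∀ j, Nonempty (K.obj j) := fun j => ⟨(F.obj j).point⟩
  have hML : K.IsMittagLeffler :=
    K.isMittagLeffler_of_exists_finite_range fun j => ⟨j, 𝟙 j, Set.toFinite _⟩
  have := K.toEventualRanges_nonempty hML
  obtain ⟨s, hs⟩ := K.toEventualRanges.eval_section_surjective_of_surjective
    (K.surjective_toEventualRanges hML) j ⟨y, hy⟩
  let σ := K.toEventualRangesSectionsEquiv s
  exact ⟨⟨σ.1, fun _ _ u => σ.2 u⟩, congrArg Subtype.val hs⟩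

theorem glim_ext {g g' : glim F A}
    (h : ∀ j y, (g.1 j : (F.obj j).X →₀ A) y = (g'.1 j : (F.obj j).X →₀ A) y) : g = g' :=
  Subtype.ext <| funext fun j => Subtype.ext <| Finsupp.ext (h j)

theorem glim_apply_eq (g : glim F A) {j j' : J} (u : j ⟶ j') :
    (g.1 j' : (F.obj j').X →₀ A) =
      ((g.1 j : (F.obj j).X →₀ A).mapDomain (F.map u).toFun).erase (F.obj j').point :=
  (congrArg Subtype.val (g.2 u)).symm

theorem mem_eventualRange_of_glim_apply_ne_zero (g : glim F A) {j : J} {y : (F.obj j).X}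
    (hy : (g.1 j : (F.obj j).X →₀ A) y ≠ 0) : y ∈ (F ⋙ forget Pointed).eventualRange j := by
  refine (Functor.mem_eventualRange_iff _).mpr fun i u => ?_
  by_contra hu
  classical
  replace hu : y ∉ Set.range (F.map u).toFun := hu
  apply hy
  rw [glim_apply_eq g u, Finsupp.erase_apply, Finsupp.mapDomain_of_notMem_range _ _ hu, ite_self]

-- Subtracting `φ *` makes the pairing compatible with the structure maps, which discard
-- whatever they send to the basepoint.
noncomputable def glimPairing (g : glim F A) (j : J) (φ : (F.obj j).X → ℤ) : A :=
  weightedSum (fun y => φ y - φ (F.obj j).point) (g.1 j : (F.obj j).X →₀ A)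

theorem glimPairing_comp (g : glim F A) {j j' : J} (u : j ⟶ j') (φ : (F.obj j').X → ℤ) :
    glimPairing g j (φ ∘ (F.map u).toFun) = glimPairing g j' φ := by
  rw [glimPairing, glimPairing, glim_apply_eq g u, weightedSum_erase (by simp),
    weightedSum_mapDomain, Function.comp_apply, (F.map u).map_point]
  rfl

theorem glimPairing_congr [IsCofilteredOrEmpty J] [∀ j, Finite (F.obj j).X] (g : glim F A)
    (j : J) {φ ψ : (F.obj j).X → ℤ} (h : ∀ z : plim F, φ (z.1 j) = ψ (z.1 j)) :
    glimPairing g j φ = glimPairing g j ψ := by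
  refine weightedSum_congr fun y hy => ?_
  obtain ⟨z, rfl⟩ := exists_plim_eval_eq_of_mem_eventualRange
    (mem_eventualRange_of_glim_apply_ne_zero g (Finsupp.mem_support_iff.mp hy))
  rw [h z]
  exact congrArg _ (h (plimPt F))

theorem glimPairing_eq_of_forall_plim [IsCofilteredOrEmpty J] [∀ j, Finite (F.obj j).X]
    (g : glim F A) {j j' : J} (φ : (F.obj j).X → ℤ) (φ' : (F.obj j').X → ℤ)
    (h : ∀ z : plim F, φ (z.1 j) = φ' (z.1 j')) : glimPairing g j φ = glimPairing g j' φ' := by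
  rw [← glimPairing_comp g (IsCofiltered.minToLeft j j') φ,
    ← glimPairing_comp g (IsCofiltered.minToRight j j') φ']
  refine glimPairing_congr g _ fun z => ?_
  rw [Function.comp_apply, Function.comp_apply, z.2, z.2]
  exact h z

theorem glimPairing_add (g : glim F A) (j : J) (φ ψ : (F.obj j).X → ℤ) :
    glimPairing g j (φ + ψ) = glimPairing g j φ + glimPairing g j ψ := by
  rw [glimPairing, glimPairing, glimPairing, ← weightedSum_add_weights]
  congr 2
  funext y
  simp only [Pi.add_apply]
  ring

theorem glimPairing_indicator {j : J} [DecidableEq (F.obj j).X] (g : glim F A) {y : (F.obj j).X}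
    (hy : y ≠ (F.obj j).point) :
    glimPairing g j (fun e => if e = y then 1 else 0) = (g.1 j : (F.obj j).X →₀ A) y := by
  simp only [glimPairing, if_neg hy.symm, sub_zero]
  exact weightedSum_indicator y _

end Glim

section Cylinders

variable {J : Type u} [Category.{v} J] {F : J ⥤ Pointed.{w}}

open Classical in
noncomputable def cylinderIndicator (j : J) (y : (F.obj j).X) : LocallyConstant (plim F) ℤ :=
  LocallyConstant.comap (plimProj F j)
    ⟨fun e => if e = y then 1 else 0, IsLocallyConstant.of_discrete _⟩

theorem cylinderIndicator_apply {j : J} [DecidableEq (F.obj j).X] (y : (F.obj j).X) (z : plim F) :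
    cylinderIndicator j y z = if z.1 j = y then 1 else 0 := by
  simp [cylinderIndicator, plimProj]

theorem sum_cylinderIndicator_fiber {j j' : J} [Fintype (F.obj j).X] [DecidableEq (F.obj j').X]
    (u : j ⟶ j') (y : (F.obj j').X) :
    ∑ x with (F.map u).toFun x = y, cylinderIndicator j x = cylinderIndicator j' y := by
  classical
  ext z
  rw [← LocallyConstant.evalAddMonoidHom_apply, map_sum]
  simp only [LocallyConstant.evalAddMonoidHom_apply, cylinderIndicator_apply, Finset.sum_ite_eq,
    Finset.mem_filter, Finset.mem_univ, true_and, z.2 u]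

end Cylinders

section OfHom

variable {J : Type u} [Category.{v} J] {F : J ⥤ Pointed.{w}} [∀ j, Finite (F.obj j).X]
  {A : Type*} [AddCommGroup A]

noncomputable def smashOfHom (ℓ : LocallyConstant (plim F) ℤ →+ A) (j : J) :
    Smash (F.obj j).X (F.obj j).point A :=
  ⟨(Finsupp.equivFunOnFinite.symm fun y => ℓ (cylinderIndicator j y)).erase (F.obj j).point,
    Finsupp.erase_same⟩

theorem smashOfHom_apply (ℓ : LocallyConstant (plim F) ℤ →+ A) {j : J} [DecidableEq (F.obj j).X]
    (y : (F.obj j).X) :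
    (smashOfHom ℓ j : (F.obj j).X →₀ A) y =
      if y = (F.obj j).point then 0 else ℓ (cylinderIndicator j y) := by
  simp only [smashOfHom, Finsupp.erase_apply, Finsupp.equivFunOnFinite_symm_apply_apply]

theorem smashMap_smashOfHom (ℓ : LocallyConstant (plim F) ℤ →+ A) {j j' : J} (u : j ⟶ j') :
    smashMap (F.obj j).point (F.obj j').point (F.map u).toFun A (smashOfHom ℓ j) =
      smashOfHom ℓ j' := by
  classical
  have := Fintype.ofFinite (F.obj j).X
  refine Subtype.ext <| Finsupp.ext fun y => ?_
  change ((Finsupp.mapDomain (F.map u).toFun (smashOfHom ℓ j : (F.obj j).X →₀ A)).erase _) y = _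
  rw [Finsupp.erase_apply, smashOfHom_apply]
  split_ifs with hy
  · rfl
  rw [Finsupp.mapDomain_apply_eq_sum_fiber, ← sum_cylinderIndicator_fiber u y, map_sum]
  refine Finset.sum_congr rfl fun x hx => ?_
  have hx : x ≠ (F.obj j).point := by
    rintro rfl
    exact hy ((Finset.mem_filter.mp hx).2 ▸ (F.map u).map_point)
  rw [smashOfHom_apply, if_neg hx]

noncomputable def glimOfHom : (LocallyConstant (plim F) ℤ →+ A) →+ glim F A where
  toFun ℓ := ⟨smashOfHom ℓ, fun _ _ u => smashMap_smashOfHom ℓ u⟩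
  map_zero' := glim_ext fun j y => by
    classical
    rw [smashOfHom_apply]
    split_ifs <;> simp
  map_add' ℓ₁ ℓ₂ := glim_ext fun j y => by
    classical
    show _ = (smashOfHom ℓ₁ j : (F.obj j).X →₀ A) y + (smashOfHom ℓ₂ j : (F.obj j).X →₀ A) y
    simp only [smashOfHom_apply]
    split_ifs <;> simp

theorem glimOfHom_apply (ℓ : LocallyConstant (plim F) ℤ →+ A) (j : J) :
    (glimOfHom ℓ).1 j = smashOfHom ℓ j := rfl

end OfHom

section Duality

variable {J : Type u} [Category.{v} J] [IsCofiltered J] {F : J ⥤ Pointed.{w}}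
  [∀ j, Finite (F.obj j).X] {A : Type*} [AddCommGroup A]

theorem LocallyConstant.exists_eq_comp_plimProj (f : LocallyConstant (plim F) ℤ) :
    ∃ (j : J) (φ : (F.obj j).X → ℤ), ∀ z, f z = φ (z.1 j) := by
  obtain ⟨j, hj⟩ := f.exists_factorsThrough_plimProj F
  exact ⟨j, Function.extend (plimProj F j) f 0, fun z => (hj.extend_apply 0 z).symm⟩

noncomputable def glimPairingLC (g : glim F A) (f : LocallyConstant (plim F) ℤ) : A :=
  glimPairing g _ f.exists_eq_comp_plimProj.choose_spec.choose

theorem glimPairingLC_eq (g : glim F A) {f : LocallyConstant (plim F) ℤ} {j : J}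
    {φ : (F.obj j).X → ℤ} (hf : ∀ z, f z = φ (z.1 j)) : glimPairingLC g f = glimPairing g j φ :=
  glimPairing_eq_of_forall_plim g _ _ fun z =>
    (f.exists_eq_comp_plimProj.choose_spec.choose_spec z).symm.trans (hf z)

noncomputable def glimPairingHom (g : glim F A) : LocallyConstant (plim F) ℤ →+ A :=
  AddMonoidHom.mk' (glimPairingLC g) fun f₁ f₂ => by
    obtain ⟨j₁, φ₁, h₁⟩ := f₁.exists_eq_comp_plimProj
    obtain ⟨j₂, φ₂, h₂⟩ := f₂.exists_eq_comp_plimProj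
    let u₁ := IsCofiltered.minToLeft j₁ j₂
    let u₂ := IsCofiltered.minToRight j₁ j₂
    have h₁' : ∀ z : plim F, f₁ z = (φ₁ ∘ (F.map u₁).toFun) (z.1 _) := fun z => by
      rw [h₁, Function.comp_apply, z.2]
    have h₂' : ∀ z : plim F, f₂ z = (φ₂ ∘ (F.map u₂).toFun) (z.1 _) := fun z => by
      rw [h₂, Function.comp_apply, z.2]
    have h : ∀ z : plim F,
        (f₁ + f₂) z = (φ₁ ∘ (F.map u₁).toFun + φ₂ ∘ (F.map u₂).toFun) (z.1 _) := fun z => by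
      rw [LocallyConstant.add_apply, h₁', h₂', Pi.add_apply]
    rw [glimPairingLC_eq g h₁', glimPairingLC_eq g h₂', glimPairingLC_eq g h, glimPairing_add]

end Duality

section Divisibility

variable {J : Type u} [Category.{v} J] [IsCofiltered J] {F : J ⥤ Pointed.{w}}
  [∀ j, Finite (F.obj j).X] {A : Type*} [AddCommGroup A]

theorem glimOfHom_glimPairingHom (g : glim F A) : glimOfHom (glimPairingHom g) = g := by
  classical
  refine glim_ext fun j y => ?_
  rw [glimOfHom_apply, smashOfHom_apply]
  split_ifs with hy
  · rw [hy]
    exact (g.1 j).2.symm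
  · exact (glimPairingLC_eq g fun z => cylinderIndicator_apply y z).trans
      (glimPairing_indicator g hy)

theorem glim_exists_nsmul_eq {n : ℕ} (hA : ∀ a : A, ∃ b, n • b = a) (g : glim F A) :
    ∃ g', n • g' = g := by
  obtain ⟨ψ, hψ⟩ := (glimPairingHom g).exists_nsmul_eq_of_projective hA
  exact ⟨glimOfHom ψ, by rw [← map_nsmul, hψ, glimOfHom_glimPairingHom]⟩

end Divisibility

/-- Let `A` be an abelian group, `T` a directed poset and `F : Tᵒᵖ ⥤ Set_*` a diagram
of *finite* pointed sets.  If `A` is `p`-divisible for a prime `p`, then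
`G(X,A) = lim_T(X∧A)` and the cokernel `H(X,A)` of the natural map `ρ` are
`p`-divisible.  Consequently, if `A` is divisible then `G(X,A)` and `H(X,A)` are
divisible. -/
theorem stmt11 {T : Type u} [PartialOrder T] [IsDirected T (· ≤ ·)] [Nonempty T]
    (F : Tᵒᵖ ⥤ Pointed.{w}) (hfin : ∀ d : Tᵒᵖ, Finite (F.obj d).X)
    (A : Type*) [AddCommGroup A] :
    (∀ p : ℕ, p.Prime → (∀ a : A, ∃ b : A, p • b = a) →
      ((∀ g : glim F A, ∃ g' : glim F A, p • g' = g) ∧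
        (∀ x : ↥(glim F A) ⧸ (rho F A).range, ∃ y, p • y = x))) ∧
    ((∀ n : ℕ, 1 ≤ n → ∀ a : A, ∃ b : A, n • b = a) →
      ((∀ n : ℕ, 1 ≤ n → ∀ g : glim F A, ∃ g' : glim F A, n • g' = g) ∧
        (∀ n : ℕ, 1 ≤ n → ∀ x : ↥(glim F A) ⧸ (rho F A).range, ∃ y, n • y = x))) := by
  have := hfin
  refine ⟨fun p _ hA => ⟨glim_exists_nsmul_eq hA,
      QuotientAddGroup.exists_nsmul_eq (glim_exists_nsmul_eq hA)⟩, fun hA => ⟨?_, ?_⟩⟩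
  · exact fun n hn => glim_exists_nsmul_eq (hA n hn)
  · exact fun n hn => QuotientAddGroup.exists_nsmul_eq (glim_exists_nsmul_eq (hA n hn))
end
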